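/- arXiv:1802.06954 — 5 statements merged into one kernel-verified Lean document; each statement's English description precedes it below -/
import Mathlib

section
/- Fix constants κ₀, λ₀ ≥ 1 and suppose that for every n ≥ 1 and all independent symmetric random vectors X_1,…,X_n and Y_1,…,Y_n in any real separable Banach space, the implication holds: if X_i is (1,1)-dominated by Y_i for each i ≤ n, then ∑ X_i is (κ₀,λ₀)-dominated by ∑ Y_i. Then for every κ, λ ≥ 1, every n ≥ 1 and all independent symmetric random vectors X_1,…,X_n and Y_1,…,Y_n in a real separable Banach space such that X_i is (κ,λ)-dominated by Y_i for each i ≤ n, the sum ∑ X_i is (⌈κ⌉κ₀, ⌈κ⌉λλ₀)-dominated by ∑ Y_i. -/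
open MeasureTheory ProbabilityTheory
open scoped ENNReal BigOperators

noncomputable section

/-- A continuous norm on a real normed space `E` (a norm possibly different from the
ambient one, required to be continuous with respect to the ambient topology). -/
def IsContNorm {E : Type*} [NormedAddCommGroup E] [NormedSpace ℝ E] (N : E → ℝ) : Prop :=
  Continuous N ∧ (∀ x y : E, N (x + y) ≤ N x + N y) ∧
    (∀ (c : ℝ) (x : E), N (c • x) = |c| * N x) ∧ ∀ x : E, N x = 0 → x = 0

/-- A random vector is symmetric if `X` and `-X` have the same distribution. -/
def IsSymmetricRV {Ω E : Type*} [MeasurableSpace Ω] [MeasurableSpace E] [Neg E]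
    (μ : Measure Ω) (X : Ω → E) : Prop :=
  Measure.map X μ = Measure.map (fun ω => -(X ω)) μ

/-- `X` is `(κ, λ)`-dominated by `Y`: for every continuous norm `N` on `E`,
`P(N(X) > 1) ≤ κ P(λ N(Y) > 1)`. -/
def Dominated {Ω E : Type*} [MeasurableSpace Ω] [NormedAddCommGroup E] [NormedSpace ℝ E]
    (μ : Measure Ω) (κ lam : ℝ) (X Y : Ω → E) : Prop :=
  ∀ N : E → ℝ, IsContNorm N →
    μ {ω | 1 < N (X ω)} ≤ ENNReal.ofReal κ * μ {ω | 1 < lam * N (Y ω)}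

universe u v

lemma IsContNorm.zero' {E : Type*} [NormedAddCommGroup E] [NormedSpace ℝ E] {N : E → ℝ}
    (hN : IsContNorm N) : N 0 = 0 := by
  have h := hN.2.2.1 0 (0 : E)
  simpa using h

lemma IsContNorm.sum_le' {E : Type*} [NormedAddCommGroup E] [NormedSpace ℝ E] {N : E → ℝ}
    (hN : IsContNorm N) {ι : Type*} (s : Finset ι) (f : ι → E) :
    N (∑ i ∈ s, f i) ≤ ∑ i ∈ s, N (f i) :=
  Finset.le_sum_of_subadditive N hN.zero'.le hN.2.1 s f

namespace Red11

/-- Uniform probability measure on `Fin n → Fin (m+1)`. -/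
def unifPi (n m : ℕ) : Measure (Fin n → Fin (m + 1)) :=
  Measure.pi fun _ => (PMF.uniformOfFintype (Fin (m + 1))).toMeasure

instance (n m : ℕ) : IsProbabilityMeasure (unifPi n m) := by
  unfold unifPi; infer_instance

lemma unifPi_singleton {n m : ℕ} (u : Fin n → Fin (m + 1)) :
    unifPi n m {u} = ∏ _i : Fin n, (((m + 1 : ℕ) : ℝ≥0∞))⁻¹ := by
  rw [unifPi, ← Set.univ_pi_singleton u, Measure.pi_pi]
  refine Finset.prod_congr rfl fun i _ => ?_
  rw [PMF.toMeasure_apply_singleton _ _ (measurableSet_singleton _),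
    PMF.uniformOfFintype_apply]
  simp

variable {Ω : Type u} {E : Type v} [MeasurableSpace Ω] [NormedAddCommGroup E]
  [NormedSpace ℝ E] [MeasurableSpace E] [BorelSpace E]

lemma measurable_W {n m : ℕ} (Z : Ω → E) (hZ : Measurable Z)
    (G : Fin (m + 1) → E → E) (hG : ∀ k, Measurable (G k)) (i0 : Fin n) :
    Measurable fun p : (Fin n → Fin (m + 1)) × Ω => G (p.1 i0) (Z p.2) := by
  have h1 : Measurable fun q : E × Fin (m + 1) => G q.2 q.1 :=
    measurable_from_prod_countable_left fun k => hG k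
  exact h1.comp ((hZ.comp measurable_snd).prodMk ((measurable_pi_apply i0).comp measurable_fst))

lemma meas_single {n m : ℕ} (μ : Measure Ω) [IsProbabilityMeasure μ]
    (Z : Ω → E) (hZ : Measurable Z)
    (G : Fin (m + 1) → E → E) (hG : ∀ k, Measurable (G k)) (i0 : Fin n)
    (s : Set E) (hs : MeasurableSet s) :
    ((unifPi n m).prod μ) ((fun p : (Fin n → Fin (m + 1)) × Ω => G (p.1 i0) (Z p.2)) ⁻¹' s)
      = (((m + 1 : ℕ) : ℝ≥0∞))⁻¹ * ∑ k, μ (Z ⁻¹' (G k ⁻¹' s)) := by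
  classical
  set c : ℝ≥0∞ := (((m + 1 : ℕ) : ℝ≥0∞))⁻¹ with hc
  have hW : Measurable fun p : (Fin n → Fin (m + 1)) × Ω => G (p.1 i0) (Z p.2) :=
    measurable_W Z hZ G hG i0
  rw [Measure.prod_apply (hW hs)]
  have hsec : ∀ u : Fin n → Fin (m + 1),
      (Prod.mk u ⁻¹' ((fun p : (Fin n → Fin (m + 1)) × Ω => G (p.1 i0) (Z p.2)) ⁻¹' s))
        = Z ⁻¹' (G (u i0) ⁻¹' s) := fun u => rfl
  simp_rw [hsec]
  rw [lintegral_fintype]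
  have step1 : ∀ u : Fin n → Fin (m + 1),
      μ (Z ⁻¹' (G (u i0) ⁻¹' s)) * unifPi n m {u}
        = ∏ i, ((if i = i0 then μ (Z ⁻¹' (G (u i) ⁻¹' s)) else 1) * c) := by
    intro u
    rw [Finset.prod_mul_distrib, Finset.prod_ite_eq' Finset.univ i0
      (fun i => μ (Z ⁻¹' (G (u i) ⁻¹' s))), unifPi_singleton]
    simp [hc]
  rw [Finset.sum_congr rfl fun u _ => step1 u]
  have key := Finset.prod_univ_sum (fun _ : Fin n => (Finset.univ : Finset (Fin (m + 1))))
    (fun i k => (if i = i0 then μ (Z ⁻¹' (G k ⁻¹' s)) else 1) * c)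
  rw [Fintype.piFinset_univ] at key
  rw [← key]
  have hcancel : ((m + 1 : ℕ) : ℝ≥0∞) * c = 1 :=
    ENNReal.mul_inv_cancel (by exact_mod_cast Nat.succ_ne_zero m) (ENNReal.natCast_ne_top _)
  rw [Finset.prod_eq_single i0 ?h1 (by simp)]
  · have heq : ∀ k : Fin (m + 1),
        (if i0 = i0 then μ (Z ⁻¹' (G k ⁻¹' s)) else 1) * c = μ (Z ⁻¹' (G k ⁻¹' s)) * c :=
      fun k => by rw [if_pos rfl]
    rw [Finset.sum_congr rfl fun k _ => heq k, ← Finset.sum_mul, mul_comm]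
  case h1 =>
    intro b _ hb
    rw [Finset.sum_congr rfl fun k _ => by rw [if_neg hb, one_mul]]
    rw [Finset.sum_const, Finset.card_univ, Fintype.card_fin, nsmul_eq_mul, hcancel]

lemma meas_inter {n m : ℕ} (μ : Measure Ω) [IsProbabilityMeasure μ]
    (X : Fin n → Ω → E) (hX : ∀ i, Measurable (X i))
    (hind : iIndepFun X μ)
    (F : Fin n → Fin (m + 1) → E → E) (hF : ∀ i k, Measurable (F i k))
    (S : Finset (Fin n)) (s : Fin n → Set E) (hs : ∀ i, MeasurableSet (s i)) :
    ((unifPi n m).prod μ)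
        (⋂ i ∈ S, (fun p : (Fin n → Fin (m + 1)) × Ω => F i (p.1 i) (X i p.2)) ⁻¹' s i)
      = ∏ i ∈ S, ((((m + 1 : ℕ) : ℝ≥0∞))⁻¹ * ∑ k, μ (X i ⁻¹' (F i k ⁻¹' s i))) := by
  classical
  set c : ℝ≥0∞ := (((m + 1 : ℕ) : ℝ≥0∞))⁻¹ with hc
  have hW : ∀ i, Measurable fun p : (Fin n → Fin (m + 1)) × Ω => F i (p.1 i) (X i p.2) :=
    fun i => measurable_W (X i) (hX i) (F i) (hF i) i
  have hT : MeasurableSet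
      (⋂ i ∈ S, (fun p : (Fin n → Fin (m + 1)) × Ω => F i (p.1 i) (X i p.2)) ⁻¹' s i) := by
    exact MeasurableSet.biInter S.countable_toSet fun i _ => (hW i) (hs i)
  rw [Measure.prod_apply hT]
  have hsec : ∀ u : Fin n → Fin (m + 1),
      (Prod.mk u ⁻¹'
        (⋂ i ∈ S, (fun p : (Fin n → Fin (m + 1)) × Ω => F i (p.1 i) (X i p.2)) ⁻¹' s i))
        = ⋂ i ∈ S, X i ⁻¹' (F i (u i) ⁻¹' s i) := by
    intro u; ext ω; simp
  simp_rw [hsec]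
  rw [lintegral_fintype]
  have hindep := iIndepFun_iff_measure_inter_preimage_eq_mul.mp hind
  have step1 : ∀ u : Fin n → Fin (m + 1),
      μ (⋂ i ∈ S, X i ⁻¹' (F i (u i) ⁻¹' s i)) * unifPi n m {u}
        = ∏ i, ((if i ∈ S then μ (X i ⁻¹' (F i (u i) ⁻¹' s i)) else 1) * c) := by
    intro u
    rw [hindep S (fun i _ => (hF i (u i)) (hs i))]
    rw [Finset.prod_mul_distrib, Finset.prod_ite_mem Finset.univ S
      (fun i => μ (X i ⁻¹' (F i (u i) ⁻¹' s i))), Finset.univ_inter, unifPi_singleton]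
  rw [Finset.sum_congr rfl fun u _ => step1 u]
  have key := Finset.prod_univ_sum (fun _ : Fin n => (Finset.univ : Finset (Fin (m + 1))))
    (fun i k => (if i ∈ S then μ (X i ⁻¹' (F i k ⁻¹' s i)) else 1) * c)
  rw [Fintype.piFinset_univ] at key
  rw [← key]
  have hcancel : ((m + 1 : ℕ) : ℝ≥0∞) * c = 1 :=
    ENNReal.mul_inv_cancel (by exact_mod_cast Nat.succ_ne_zero m) (ENNReal.natCast_ne_top _)
  have hfac : ∀ i, (∑ k, ((if i ∈ S then μ (X i ⁻¹' (F i k ⁻¹' s i)) else 1) * c))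
      = if i ∈ S then c * ∑ k, μ (X i ⁻¹' (F i k ⁻¹' s i)) else 1 := by
    intro i
    by_cases hi : i ∈ S
    · simp only [if_pos hi]
      rw [← Finset.sum_mul, mul_comm]
    · simp only [if_neg hi, one_mul]
      rw [Finset.sum_const, Finset.card_univ, Fintype.card_fin, nsmul_eq_mul, hcancel]
  rw [Finset.prod_congr rfl fun i _ => hfac i]
  rw [Finset.prod_ite_mem Finset.univ S
    (fun i => c * ∑ k, μ (X i ⁻¹' (F i k ⁻¹' s i))), Finset.univ_inter]

lemma indep_W {n m : ℕ} (μ : Measure Ω) [IsProbabilityMeasure μ]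
    (X : Fin n → Ω → E) (hX : ∀ i, Measurable (X i))
    (hind : iIndepFun X μ)
    (F : Fin n → Fin (m + 1) → E → E) (hF : ∀ i k, Measurable (F i k)) :
    iIndepFun
      (fun i (p : (Fin n → Fin (m + 1)) × Ω) => F i (p.1 i) (X i p.2))
      ((unifPi n m).prod μ) := by
  classical
  rw [iIndepFun_iff_measure_inter_preimage_eq_mul]
  intro S sets hsets
  set sets' : Fin n → Set E := fun i => if i ∈ S then sets i else Set.univ with hsets'def
  have hs' : ∀ i, MeasurableSet (sets' i) := by
    intro i
    by_cases h : i ∈ S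
    · simpa [sets', h] using hsets i h
    · simp [sets', h]
  have h1 : (⋂ i ∈ S, (fun p : (Fin n → Fin (m + 1)) × Ω => F i (p.1 i) (X i p.2)) ⁻¹' sets i)
      = ⋂ i ∈ S, (fun p : (Fin n → Fin (m + 1)) × Ω => F i (p.1 i) (X i p.2)) ⁻¹' sets' i := by
    apply Set.iInter₂_congr
    intro i hi
    simp [sets', hi]
  rw [h1, meas_inter μ X hX hind F hF S sets' hs']
  refine Finset.prod_congr rfl fun i hi => ?_
  rw [meas_single μ (X i) (hX i) (F i) (hF i) i (sets i) (hsets i hi)]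
  simp [sets', hi]

lemma symm_W {n m : ℕ} (μ : Measure Ω) [IsProbabilityMeasure μ]
    (Z : Ω → E) (hZ : Measurable Z) (hsym : IsSymmetricRV μ Z)
    (G : Fin (m + 1) → E → E) (hG : ∀ k, Measurable (G k))
    (hGneg : ∀ k e, G k (-e) = -(G k e)) (i0 : Fin n) :
    IsSymmetricRV ((unifPi n m).prod μ)
      (fun p : (Fin n → Fin (m + 1)) × Ω => G (p.1 i0) (Z p.2)) := by
  have hW : Measurable fun p : (Fin n → Fin (m + 1)) × Ω => G (p.1 i0) (Z p.2) :=
    measurable_W Z hZ G hG i0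
  have hWneg : Measurable fun p : (Fin n → Fin (m + 1)) × Ω => -(G (p.1 i0) (Z p.2)) := hW.neg
  refine Measure.ext fun A hA => ?_
  rw [Measure.map_apply hW hA, Measure.map_apply hWneg hA]
  have hkey : (fun p : (Fin n → Fin (m + 1)) × Ω => -(G (p.1 i0) (Z p.2)))
      = fun p : (Fin n → Fin (m + 1)) × Ω => G (p.1 i0) (-(Z p.2)) := by
    funext p; rw [hGneg]
  rw [hkey]
  rw [meas_single μ Z hZ G hG i0 A hA,
    meas_single μ (fun ω => -(Z ω)) hZ.neg G hG i0 A hA]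
  congr 1
  refine Finset.sum_congr rfl fun k _ => ?_
  have hB : MeasurableSet (G k ⁻¹' A) := hG k hA
  calc μ (Z ⁻¹' (G k ⁻¹' A)) = Measure.map Z μ (G k ⁻¹' A) := (Measure.map_apply hZ hB).symm
    _ = Measure.map (fun ω => -(Z ω)) μ (G k ⁻¹' A) := by rw [hsym]
    _ = μ ((fun ω => -(Z ω)) ⁻¹' (G k ⁻¹' A)) := Measure.map_apply hZ.neg hB

end Red11

open Red11

/-- **Lemma (reduction to `(1,1)`-domination).** If sums of independent symmetric random
vectors inherit `(1,1)`-domination with constants `(κ₀, lam₀)` (in every separable Banach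
space, over every probability space), then `(κ, λ)`-domination of the summands yields
`(⌈κ⌉ κ₀, ⌈κ⌉ λ lam₀)`-domination of the sums. -/
theorem reduction_to_one_one
    (κ₀ lam₀ : ℝ) (hκ₀ : 1 ≤ κ₀) (hlam₀ : 1 ≤ lam₀)
    (H : ∀ (Ω : Type u) (E : Type v) [MeasurableSpace Ω] [NormedAddCommGroup E]
      [NormedSpace ℝ E] [CompleteSpace E] [TopologicalSpace.SeparableSpace E]
      [MeasurableSpace E] [BorelSpace E]
      (μ : Measure Ω) [IsProbabilityMeasure μ] (n : ℕ) (X Y : Fin n → Ω → E),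
      1 ≤ n →
      (∀ i, Measurable (X i)) → (∀ i, Measurable (Y i)) →
      iIndepFun X μ → iIndepFun Y μ →
      (∀ i, IsSymmetricRV μ (X i)) → (∀ i, IsSymmetricRV μ (Y i)) →
      (∀ i, Dominated μ 1 1 (X i) (Y i)) →
      Dominated μ κ₀ lam₀ (fun ω => ∑ i, X i ω) (fun ω => ∑ i, Y i ω)) :
    ∀ (Ω : Type u) (E : Type v) [MeasurableSpace Ω] [NormedAddCommGroup E]
      [NormedSpace ℝ E] [CompleteSpace E] [TopologicalSpace.SeparableSpace E]
      [MeasurableSpace E] [BorelSpace E]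
      (μ : Measure Ω) [IsProbabilityMeasure μ] (n : ℕ) (X Y : Fin n → Ω → E)
      (κ lam : ℝ), 1 ≤ κ → 1 ≤ lam →
      1 ≤ n →
      (∀ i, Measurable (X i)) → (∀ i, Measurable (Y i)) →
      iIndepFun X μ → iIndepFun Y μ →
      (∀ i, IsSymmetricRV μ (X i)) → (∀ i, IsSymmetricRV μ (Y i)) →
      (∀ i, Dominated μ κ lam (X i) (Y i)) →
      Dominated μ ((⌈κ⌉ : ℝ) * κ₀) ((⌈κ⌉ : ℝ) * lam * lam₀)
        (fun ω => ∑ i, X i ω) (fun ω => ∑ i, Y i ω) := by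
  intro Ω E _ _ _ _ _ _ _ μ _ n X Y κ lam hκ hlam hn hX hY hXind hYind hXsym hYsym hdom
  classical
  have hlam' : (0 : ℝ) < lam := lt_of_lt_of_le one_pos hlam
  have hpos : 0 < ⌈κ⌉ := Int.ceil_pos.mpr (lt_of_lt_of_le one_pos hκ)
  obtain ⟨m, hm⟩ : ∃ m : ℕ, ⌈κ⌉.toNat = m + 1 := by
    refine ⟨⌈κ⌉.toNat - 1, ?_⟩
    omega
  have hceil : ((m + 1 : ℕ) : ℝ) = (⌈κ⌉ : ℝ) := by
    rw [← hm]
    exact_mod_cast congrArg (Int.cast : ℤ → ℝ) (Int.toNat_of_nonneg hpos.le)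
  have hκle : κ ≤ ((m + 1 : ℕ) : ℝ) := by rw [hceil]; exact Int.le_ceil κ
  set ν := unifPi n m with hν
  set μ' := ν.prod μ with hμ'
  set c : ℝ≥0∞ := (((m + 1 : ℕ) : ℝ≥0∞))⁻¹ with hcdef
  have hcancel : ((m + 1 : ℕ) : ℝ≥0∞) * c = 1 :=
    ENNReal.mul_inv_cancel (by exact_mod_cast Nat.succ_ne_zero m) (ENNReal.natCast_ne_top _)
  -- the split pieces of X
  set FX : Fin (m + 1) → Fin n → Fin (m + 1) → E → E :=
    fun j _ k e => if k = j then e else 0 with hFXdef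
  have hFXmeas : ∀ j i k, Measurable (FX j i k) := by
    intro j i k
    have : FX j i k = fun e : E => if k = j then e else 0 := by rw [hFXdef]
    rw [this]
    by_cases h : k = j
    · simpa [h] using measurable_id'
    · simpa [h] using (measurable_const : Measurable fun _ : E => (0 : E))
  set FY : Fin n → Fin (m + 1) → E → E := fun _ _ e => lam • e with hFYdef
  have hFYmeas : ∀ (i : Fin n) k, Measurable (FY i k) := fun i k => measurable_id.const_smul lam
  -- μ' of a snd-cylinder
  have snd_meas : ∀ B : Set Ω, μ' (Prod.snd ⁻¹' B) = μ B := by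
    intro B
    have : Prod.snd ⁻¹' B = (Set.univ : Set (Fin n → Fin (m + 1))) ×ˢ B := by
      ext p; simp
    rw [this, hμ', Measure.prod_prod, measure_univ, one_mul]
  -- (1,1)-domination of the pieces
  have hdom11 : ∀ (j : Fin (m + 1)) (i : Fin n),
      Dominated μ' 1 1 (fun p : (Fin n → Fin (m + 1)) × Ω => FX j i (p.1 i) (X i p.2))
        (fun p : (Fin n → Fin (m + 1)) × Ω => FY i (p.1 i) (Y i p.2)) := by
    intro j i N hN
    have hsopen : MeasurableSet {e : E | 1 < N e} :=
      (isOpen_lt continuous_const hN.1).measurableSet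
    have hL : μ' {p : (Fin n → Fin (m + 1)) × Ω | 1 < N (FX j i (p.1 i) (X i p.2))}
        = c * μ {ω | 1 < N (X i ω)} := by
      have : {p : (Fin n → Fin (m + 1)) × Ω | 1 < N (FX j i (p.1 i) (X i p.2))}
          = (fun p : (Fin n → Fin (m + 1)) × Ω => FX j i (p.1 i) (X i p.2)) ⁻¹' {e | 1 < N e} :=
        rfl
      rw [this, hμ', hν, meas_single μ (X i) (hX i) (FX j i) (hFXmeas j i) i _ hsopen]
      congr 1
      rw [Finset.sum_eq_single j ?hne (by simp)]
      · congr 1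
        ext ω
        simp [hFXdef]
      case hne =>
        intro k _ hk
        have hemp : X i ⁻¹' (FX j i k ⁻¹' {e | 1 < N e}) = ∅ := by
          ext ω
          simp only [Set.mem_preimage, Set.mem_setOf_eq, hFXdef, if_neg hk,
            Set.mem_empty_iff_false, iff_false, not_lt, hN.zero']
          exact zero_le_one
        rw [hemp, measure_empty]
    have hR : {p : (Fin n → Fin (m + 1)) × Ω | 1 < 1 * N (FY i (p.1 i) (Y i p.2))}
        = Prod.snd ⁻¹' {ω | 1 < lam * N (Y i ω)} := by
      ext p
      simp only [Set.mem_setOf_eq, Set.mem_preimage, one_mul, hFYdef, hN.2.2.1 lam,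
        abs_of_pos hlam']
    rw [hL, hR, snd_meas]
    have h1 := hdom i N hN
    calc c * μ {ω | 1 < N (X i ω)}
        ≤ c * (ENNReal.ofReal κ * μ {ω | 1 < lam * N (Y i ω)}) := mul_le_mul_right h1 c
      _ = (c * ENNReal.ofReal κ) * μ {ω | 1 < lam * N (Y i ω)} := by rw [mul_assoc]
      _ ≤ 1 * μ {ω | 1 < lam * N (Y i ω)} := by
          refine mul_le_mul_left ?_ _
          have h2 : ENNReal.ofReal κ ≤ ((m + 1 : ℕ) : ℝ≥0∞) := by
            rw [← ENNReal.ofReal_natCast]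
            exact ENNReal.ofReal_le_ofReal hκle
          calc c * ENNReal.ofReal κ ≤ c * ((m + 1 : ℕ) : ℝ≥0∞) := mul_le_mul_right h2 c
            _ = 1 := by rw [mul_comm]; exact hcancel
      _ = ENNReal.ofReal 1 * μ {ω | 1 < lam * N (Y i ω)} := by rw [ENNReal.ofReal_one]
  -- apply H for each j
  have hH : ∀ j : Fin (m + 1),
      Dominated μ' κ₀ lam₀
        (fun p => ∑ i, (fun p : (Fin n → Fin (m + 1)) × Ω => FX j i (p.1 i) (X i p.2)) p)
        (fun p => ∑ i, (fun p : (Fin n → Fin (m + 1)) × Ω => FY i (p.1 i) (Y i p.2)) p) := by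
    intro j
    refine H ((Fin n → Fin (m + 1)) × Ω) E μ' n
      (fun i p => FX j i (p.1 i) (X i p.2)) (fun i p => FY i (p.1 i) (Y i p.2)) hn
      (fun i => measurable_W (X i) (hX i) (FX j i) (hFXmeas j i) i)
      (fun i => measurable_W (Y i) (hY i) (FY i) (hFYmeas i) i)
      (indep_W μ X hX hXind (FX j) (hFXmeas j))
      (indep_W μ Y hY hYind FY hFYmeas)
      (fun i => symm_W μ (X i) (hX i) (hXsym i) (FX j i) (hFXmeas j i) ?_ i)
      (fun i => symm_W μ (Y i) (hY i) (hYsym i) (FY i) (hFYmeas i) ?_ i)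
      (fun i => hdom11 j i)
    · intro k e
      show (if k = j then -e else 0) = -(if k = j then e else 0)
      split_ifs <;> simp
    · intro k e
      show lam • (-e) = -(lam • e)
      exact smul_neg lam e
  -- now the main estimate
  intro N hN
  have hc0 : (0 : ℝ) < ((m + 1 : ℕ) : ℝ) := by positivity
  have hN' : IsContNorm (fun e => ((m + 1 : ℕ) : ℝ) * N e) := by
    refine ⟨continuous_const.mul hN.1, ?_, ?_, ?_⟩
    · intro x y
      show ((m + 1 : ℕ) : ℝ) * N (x + y) ≤ ((m + 1 : ℕ) : ℝ) * N x + ((m + 1 : ℕ) : ℝ) * N y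
      have h6 := hN.2.1 x y
      nlinarith
    · intro a x
      show ((m + 1 : ℕ) : ℝ) * N (a • x) = |a| * (((m + 1 : ℕ) : ℝ) * N x)
      rw [hN.2.2.1]
      ring
    · intro x hx
      have hx' : ((m + 1 : ℕ) : ℝ) * N x = 0 := hx
      exact hN.2.2.2 x ((mul_eq_zero.mp hx').resolve_left hc0.ne')
  -- the target event upstairs
  set A : Set Ω := {ω | 1 < N (∑ i, X i ω)} with hA
  set B : Set Ω := {ω | 1 < ((⌈κ⌉ : ℝ) * lam * lam₀) * N (∑ i, Y i ω)} with hB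
  set T : Fin (m + 1) → Set ((Fin n → Fin (m + 1)) × Ω) :=
    fun j => {p | 1 < ((m + 1 : ℕ) : ℝ) * N (∑ i, FX j i (p.1 i) (X i p.2))} with hT
  have hsub : Prod.snd ⁻¹' A ⊆ ⋃ j, T j := by
    intro p hp
    simp only [Set.mem_preimage, hA, Set.mem_setOf_eq] at hp
    by_contra hcon
    simp only [Set.mem_iUnion, hT, Set.mem_setOf_eq, not_exists, not_lt] at hcon
    have hsum : ∑ i, X i p.2 = ∑ j : Fin (m + 1), ∑ i, FX j i (p.1 i) (X i p.2) := by
      rw [Finset.sum_comm]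
      refine Finset.sum_congr rfl fun i _ => ?_
      simp only [hFXdef]
      rw [Finset.sum_ite_eq Finset.univ (p.1 i) (fun _ => X i p.2)]
      simp
    have h2 : N (∑ i, X i p.2)
        ≤ ∑ j : Fin (m + 1), N (∑ i, FX j i (p.1 i) (X i p.2)) := by
      rw [hsum]
      exact hN.sum_le' Finset.univ _
    have h3 : ∑ j : Fin (m + 1), N (∑ i, FX j i (p.1 i) (X i p.2))
        ≤ ∑ _j : Fin (m + 1), (((m + 1 : ℕ) : ℝ))⁻¹ := by
      refine Finset.sum_le_sum fun j _ => ?_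
      have := hcon j
      rw [← le_div_iff₀' hc0] at this
      simpa [div_eq_mul_inv] using this
    have h4 : ∑ _j : Fin (m + 1), (((m + 1 : ℕ) : ℝ))⁻¹ = 1 := by
      rw [Finset.sum_const, Finset.card_univ, Fintype.card_fin, nsmul_eq_mul]
      field_simp
    linarith
  have hTj : ∀ j, μ' (T j) ≤ ENNReal.ofReal κ₀ * μ B := by
    intro j
    have h5 := hH j (fun e => ((m + 1 : ℕ) : ℝ) * N e) hN'
    have hset : {p : (Fin n → Fin (m + 1)) × Ω |
        1 < lam₀ * (((m + 1 : ℕ) : ℝ) * N (∑ i, FY i (p.1 i) (Y i p.2)))}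
        = Prod.snd ⁻¹' B := by
      ext p
      simp only [Set.mem_setOf_eq, Set.mem_preimage, hB, hFYdef]
      rw [← Finset.smul_sum, hN.2.2.1 lam, abs_of_pos hlam', ← hceil]
      constructor <;> intro h <;> nlinarith [h]
    rw [hset, snd_meas] at h5
    exact h5
  calc μ A = μ' (Prod.snd ⁻¹' A) := (snd_meas A).symm
    _ ≤ μ' (⋃ j, T j) := measure_mono hsub
    _ ≤ ∑' j, μ' (T j) := measure_iUnion_le T
    _ = ∑ j, μ' (T j) := tsum_fintype _
    _ ≤ ∑ _j : Fin (m + 1), ENNReal.ofReal κ₀ * μ B := Finset.sum_le_sum fun j _ => hTj j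
    _ = ((m + 1 : ℕ) : ℝ≥0∞) * (ENNReal.ofReal κ₀ * μ B) := by
        rw [Finset.sum_const, Finset.card_univ, Fintype.card_fin, nsmul_eq_mul]
    _ = ENNReal.ofReal ((⌈κ⌉ : ℝ) * κ₀) * μ B := by
        rw [ENNReal.ofReal_mul (by exact_mod_cast hpos.le), ← hceil,
          ENNReal.ofReal_natCast, mul_assoc]
end
end

section
/- Let v_1,…,v_n be vectors in a real separable Banach space (E,‖·‖), let p ∈ (0,1], and let δ₁,…,δ_n be independent Bernoulli random variables with P(δ_i = 1) = p and P(δ_i = 0) = 1−p, independent of independent Rademacher signs ε₁,…,ε_n (each uniform on {−1,1}). Then P_δ( E_ε ‖∑_{i=1}^n ε_i δ_i v_i‖ > 1 ) ≥ (p/4) · 1_{{E_ε ‖∑_{i=1}^n ε_i v_i‖ > 2/p}}, where E_ε denotes expectation over the signs only and P_δ probability over the Bernoulli variables only. That is, if E_ε ‖∑ ε_i v_i‖ > 2/p, then P_δ( E_ε ‖∑ ε_i δ_i v_i‖ > 1 ) ≥ p/4. -/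
open MeasureTheory ProbabilityTheory
open scoped ENNReal BigOperators Classical

noncomputable section

/-- The sign vector `(±1)ⁿ` encoded by a Boolean vector; a uniform random `s` gives
independent Rademacher signs. -/
def signs {n : ℕ} (s : Fin n → Bool) (i : Fin n) : ℝ := if s i then 1 else -1

/-- The probability of the pattern `s` for independent Bernoulli(`p`) variables
`δ₁, …, δₙ` (`δᵢ = 1` iff `s i = true`). -/
def bernoulliWeight {n : ℕ} (p : ℝ) (s : Fin n → Bool) : ℝ :=
  ∏ i : Fin n, (if s i then p else 1 - p)

/-- Summing the Rademacher sign at a fixed coordinate over all patterns gives zero. -/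
lemma sum_signs_eq_zero {n : ℕ} (i : Fin n) :
    ∑ t : Fin n → Bool, signs t i = 0 := by
  have hinv : Function.Involutive (fun t : Fin n → Bool => Function.update t i (!t i)) := by
    intro t; funext j; by_cases hj : j = i <;> simp [Function.update, hj]
  have h : ∑ t : Fin n → Bool, signs t i
      = ∑ t : Fin n → Bool, signs (Function.update t i (!t i)) i := by
    apply Fintype.sum_equiv (Function.Involutive.toPerm _ hinv)
    intro t
    simp only [Function.Involutive.coe_toPerm]
    congr 1
    exact (hinv t).symm
  have h2 : ∀ t : Fin n → Bool, signs (Function.update t i (!t i)) i = - signs t i := by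
    intro t; simp [signs, Function.update_self]; cases t i <;> simp
  rw [Finset.sum_congr rfl (fun t _ => h2 t), Finset.sum_neg_distrib] at h
  linarith

/-- The Bernoulli weights sum to one. -/
lemma sum_bernoulliWeight {n : ℕ} (p : ℝ) :
    ∑ s : Fin n → Bool, bernoulliWeight p s = 1 := by
  unfold bernoulliWeight
  rw [← Fintype.prod_sum (fun (_ : Fin n) (b : Bool) => if b then p else 1 - p)]
  simp

/-- The marginal of the Bernoulli product weight at a fixed coordinate. -/
lemma marginal_bernoulliWeight {n : ℕ} (p : ℝ) (i : Fin n) :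
    ∑ s : Fin n → Bool, (if s i then bernoulliWeight p s else 0) = p := by
  have key : ∀ s : Fin n → Bool,
      (if s i then bernoulliWeight p s else 0)
        = ∏ j : Fin n, (if j = i then (if s j then p else 0) else (if s j then p else 1 - p)) := by
    intro s
    by_cases hs : s i
    · simp only [hs, if_true]
      unfold bernoulliWeight
      apply Finset.prod_congr rfl
      intro j _
      by_cases hj : j = i <;> simp [hj, hs]
    · simp only [hs, if_false]
      symm
      apply Finset.prod_eq_zero (Finset.mem_univ i)
      simp [hs]
  rw [Finset.sum_congr rfl (fun s _ => key s),
    ← Fintype.prod_sum (fun (j : Fin n) (b : Bool) =>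
      if j = i then (if b then p else 0) else (if b then p else 1 - p))]
  rw [Finset.prod_eq_single i (by intro j _ hj; simp [hj]) (by simp)]
  simp

lemma bernoulliWeight_nonneg {n : ℕ} {p : ℝ} (hp0 : 0 ≤ p) (hp1 : p ≤ 1)
    (s : Fin n → Bool) : 0 ≤ bernoulliWeight p s :=
  Finset.prod_nonneg (fun i _ => by by_cases h : s i <;> simp [h] <;> linarith)

/-- Contraction: the average norm of a Rademacher sum over a subset of the vectors
is at most the average norm over all vectors. -/
lemma contraction {E : Type*} [NormedAddCommGroup E] [NormedSpace ℝ E]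
    {n : ℕ} (v : Fin n → E) (s : Fin n → Bool) :
    ∑ t : Fin n → Bool, ‖∑ i, signs t i • (if s i then v i else 0)‖
      ≤ ∑ t : Fin n → Bool, ‖∑ i, signs t i • v i‖ := by
  have hA : ∀ t : Fin n → Bool,
      (2^n : ℝ) * ‖∑ i, signs t i • (if s i then v i else 0)‖
        ≤ ∑ t' : Fin n → Bool, ‖∑ i, signs (fun j => if s j then t j else t' j) i • v i‖ := by
    intro t
    have hid : (2^n : ℝ) • (∑ i, signs t i • (if s i then v i else 0))
        = ∑ t' : Fin n → Bool, ∑ i, signs (fun j => if s j then t j else t' j) i • v i := by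
      rw [Finset.sum_comm, Finset.smul_sum]
      apply Finset.sum_congr rfl
      intro i _
      by_cases hs : s i
      · have h1 : ∀ t' : Fin n → Bool,
            signs (fun j => if s j then t j else t' j) i • v i = signs t i • v i := by
          intro t'; simp [signs, hs]
        rw [Finset.sum_congr rfl (fun t' _ => h1 t'), Finset.sum_const, Finset.card_univ]
        have hcard : ((Fintype.card (Fin n → Bool) : ℕ) : ℝ) = 2^n := by simp
        rw [← Nat.cast_smul_eq_nsmul ℝ, hcard, smul_smul, smul_smul]
        simp only [hs, if_true]
      · have h1 : ∀ t' : Fin n → Bool,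
            signs (fun j => if s j then t j else t' j) i • v i = signs t' i • v i := by
          intro t'; simp [signs, hs]
        rw [Finset.sum_congr rfl (fun t' _ => h1 t'), ← Finset.sum_smul, sum_signs_eq_zero]
        simp [hs]
    calc (2^n : ℝ) * ‖∑ i, signs t i • (if s i then v i else 0)‖
        = ‖(2^n : ℝ) • ∑ i, signs t i • (if s i then v i else 0)‖ := by
          rw [norm_smul]; simp
      _ = ‖∑ t' : Fin n → Bool, ∑ i, signs (fun j => if s j then t j else t' j) i • v i‖ := by
          rw [hid]
      _ ≤ ∑ t' : Fin n → Bool, ‖∑ i, signs (fun j => if s j then t j else t' j) i • v i‖ :=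
          norm_sum_le _ _
  have hB : ∑ q : (Fin n → Bool) × (Fin n → Bool),
      ‖∑ i, signs (fun j => if s j then q.1 j else q.2 j) i • v i‖
      = (2^n : ℝ) * ∑ r : Fin n → Bool, ‖∑ i, signs r i • v i‖ := by
    have heq := Fintype.sum_equiv
      (⟨fun q => (fun j => if s j then q.1 j else q.2 j, fun j => if s j then q.2 j else q.1 j),
        fun q => (fun j => if s j then q.1 j else q.2 j, fun j => if s j then q.2 j else q.1 j),
        by intro q; ext j <;> by_cases hj : s j <;> simp [hj],
        by intro q; ext j <;> by_cases hj : s j <;> simp [hj]⟩ :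
        ((Fin n → Bool) × (Fin n → Bool)) ≃ ((Fin n → Bool) × (Fin n → Bool)))
      (fun q : (Fin n → Bool) × (Fin n → Bool) =>
        ‖∑ i, signs (fun j => if s j then q.1 j else q.2 j) i • v i‖)
      (fun q => ‖∑ i, signs q.1 i • v i‖) (fun q => rfl)
    rw [heq, Fintype.sum_prod_type]
    simp [Finset.sum_const, Finset.card_univ, Finset.mul_sum, mul_comm]
  have h2n : (0:ℝ) < 2^n := by positivity
  have hmain : (2^n : ℝ) * ∑ t : Fin n → Bool, ‖∑ i, signs t i • (if s i then v i else 0)‖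
      ≤ (2^n : ℝ) * ∑ t : Fin n → Bool, ‖∑ i, signs t i • v i‖ := by
    rw [Finset.mul_sum]
    calc ∑ t : Fin n → Bool, (2^n : ℝ) * ‖∑ i, signs t i • (if s i then v i else 0)‖
        ≤ ∑ t : Fin n → Bool, ∑ t' : Fin n → Bool,
            ‖∑ i, signs (fun j => if s j then t j else t' j) i • v i‖ :=
          Finset.sum_le_sum (fun t _ => hA t)
      _ = (2^n : ℝ) * ∑ r : Fin n → Bool, ‖∑ i, signs r i • v i‖ := by
          rw [← hB, Fintype.sum_prod_type]
  exact le_of_mul_le_mul_left hmain h2n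

/-- Abstract Paley–Zygmund / Markov step. -/
lemma markov_step {ι : Type*} [Fintype ι] (w F : ι → ℝ) (M p : ℝ) (hp0 : 0 < p)
    (hw : ∀ s, 0 ≤ w s) (hw1 : ∑ s, w s = 1) (hFM : ∀ s, F s ≤ M)
    (hlow : p * M ≤ ∑ s, w s * F s) (hM : 2 / p < M) :
    p / 4 ≤ ∑ s, if 1 < F s then w s else 0 := by
  have hMpos : 0 < M := lt_trans (by positivity) hM
  set P := ∑ s, if 1 < F s then w s else 0 with hP
  have hsplit : ∑ s, w s * F s ≤ M * P + 1 := by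
    have hterm : ∀ s : ι, w s * F s ≤ (if 1 < F s then w s * M else w s) := by
      intro s
      by_cases h : 1 < F s
      · simp only [h, if_true]
        exact mul_le_mul_of_nonneg_left (hFM s) (hw s)
      · simp only [h, if_false]
        push_neg at h
        nlinarith [hw s]
    calc ∑ s, w s * F s
        ≤ ∑ s, (if 1 < F s then w s * M else w s) := Finset.sum_le_sum (fun s _ => hterm s)
      _ = ∑ s, ((if 1 < F s then w s * M else 0) + (if 1 < F s then 0 else w s)) := by
          apply Finset.sum_congr rfl; intro s _; by_cases h : 1 < F s <;> simp [h]
      _ = M * P + ∑ s, (if 1 < F s then 0 else w s) := by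
          rw [Finset.sum_add_distrib]; congr 1
          rw [hP, Finset.mul_sum]
          apply Finset.sum_congr rfl
          intro s _; by_cases h : 1 < F s <;> simp [h, mul_comm]
      _ ≤ M * P + 1 := by
          have h1 : ∑ s, (if 1 < F s then 0 else w s) ≤ ∑ s, w s :=
            Finset.sum_le_sum (fun s _ => by by_cases h : 1 < F s <;> simp [h, hw s])
          linarith [hw1 ▸ h1]
  have h2 : 2 < p * M := by
    rw [div_lt_iff₀ hp0] at hM; linarith [mul_comm M p]
  nlinarith [hsplit, hlow, hMpos, h2]

/-- Jensen's inequality over the Bernoulli variables: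
`E_δ E_ε ‖∑ εᵢ δᵢ vᵢ‖ ≥ p · E_ε ‖∑ εᵢ vᵢ‖`. -/
lemma jensen_lower {E : Type*} [NormedAddCommGroup E] [NormedSpace ℝ E]
    {n : ℕ} (v : Fin n → E) {p : ℝ} (hp0 : 0 < p) (hp1 : p ≤ 1) :
    p * ((∑ s : Fin n → Bool, ‖∑ i, signs s i • v i‖) / 2 ^ n)
      ≤ ∑ s : Fin n → Bool, bernoulliWeight p s *
          ((∑ t : Fin n → Bool, ‖∑ i, signs t i • (if s i then v i else 0)‖) / 2 ^ n) := by
  have hw := bernoulliWeight_nonneg (n := n) hp0.le hp1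
  have h2n : (0:ℝ) < 2^n := by positivity
  have hvec : ∀ t : Fin n → Bool,
      ∑ s : Fin n → Bool, bernoulliWeight p s •
        (∑ i, signs t i • (if s i then v i else 0)) = p • ∑ i, signs t i • v i := by
    intro t
    have hterm : ∀ s : Fin n → Bool,
        bernoulliWeight p s • (∑ i, signs t i • (if s i then v i else 0))
        = ∑ i, (if s i then bernoulliWeight p s else 0) • (signs t i • v i) := by
      intro s
      rw [Finset.smul_sum]
      apply Finset.sum_congr rfl
      intro i _
      by_cases h : s i
      · simp only [h, if_true]
      · simp [h]
    rw [Finset.sum_congr rfl (fun s _ => hterm s), Finset.sum_comm, Finset.smul_sum]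
    apply Finset.sum_congr rfl
    intro i _
    rw [← Finset.sum_smul, marginal_bernoulliWeight p i]
  have hpt : ∀ t : Fin n → Bool,
      p * ‖∑ i, signs t i • v i‖ ≤ ∑ s : Fin n → Bool, bernoulliWeight p s *
        ‖∑ i, signs t i • (if s i then v i else 0)‖ := by
    intro t
    calc p * ‖∑ i, signs t i • v i‖ = ‖p • ∑ i, signs t i • v i‖ := by
          rw [norm_smul, Real.norm_eq_abs, abs_of_pos hp0]
      _ = ‖∑ s : Fin n → Bool, bernoulliWeight p s •
            (∑ i, signs t i • (if s i then v i else 0))‖ := by rw [hvec t]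
      _ ≤ ∑ s : Fin n → Bool, ‖bernoulliWeight p s •
            (∑ i, signs t i • (if s i then v i else 0))‖ := norm_sum_le _ _
      _ = ∑ s : Fin n → Bool, bernoulliWeight p s *
            ‖∑ i, signs t i • (if s i then v i else 0)‖ := by
          apply Finset.sum_congr rfl
          intro s _
          rw [norm_smul, Real.norm_eq_abs, abs_of_nonneg (hw s)]
  have hsum := Finset.sum_le_sum (fun t (_ : t ∈ Finset.univ) => hpt t)
  have lhs_eq : p * ((∑ s : Fin n → Bool, ‖∑ i, signs s i • v i‖) / 2 ^ n)
      = (∑ t : Fin n → Bool, p * ‖∑ i, signs t i • v i‖) / 2 ^ n := by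
    rw [mul_div_assoc', Finset.mul_sum]
  have rhs_eq : ∑ s : Fin n → Bool, bernoulliWeight p s *
        ((∑ t : Fin n → Bool, ‖∑ i, signs t i • (if s i then v i else 0)‖) / 2 ^ n)
      = (∑ t : Fin n → Bool, ∑ s : Fin n → Bool, bernoulliWeight p s *
          ‖∑ i, signs t i • (if s i then v i else 0)‖) / 2 ^ n := by
    have per : ∀ s : Fin n → Bool, bernoulliWeight p s *
        ((∑ t : Fin n → Bool, ‖∑ i, signs t i • (if s i then v i else 0)‖) / 2 ^ n)
        = (∑ t : Fin n → Bool, bernoulliWeight p s *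
            ‖∑ i, signs t i • (if s i then v i else 0)‖) / 2 ^ n := fun s => by
      rw [mul_div_assoc', Finset.mul_sum]
    rw [Finset.sum_congr rfl (fun s _ => per s), ← Finset.sum_div, Finset.sum_comm]
  rw [lhs_eq, rhs_eq]
  exact div_le_div_of_nonneg_right hsum h2n.le

/-- **Lemma (removing the Bernoulli variables).** For vectors `v₁, …, vₙ` in a separable
Banach space, `p ∈ (0,1]` and independent Bernoulli(`p`) variables `δᵢ` independent of the
Rademacher signs `εᵢ`: if `E_ε ‖∑ εᵢ vᵢ‖ > 2/p`, then `P_δ(E_ε ‖∑ εᵢ δᵢ vᵢ‖ > 1) ≥ p/4`.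
Expectations over the signs are averages over all `2ⁿ` sign patterns, and the probability
over the `δᵢ` is the Bernoulli-weighted sum over all `2ⁿ` zero-one patterns. -/
theorem bernoulli_removal
    {E : Type*} [NormedAddCommGroup E] [NormedSpace ℝ E]
    [CompleteSpace E] [TopologicalSpace.SeparableSpace E]
    (n : ℕ) (v : Fin n → E) (p : ℝ) (hp0 : 0 < p) (hp1 : p ≤ 1)
    (hbig : 2 / p < (∑ s : Fin n → Bool, ‖∑ i, signs s i • v i‖) / 2 ^ n) :
    p / 4 ≤ ∑ s : Fin n → Bool,
      (if 1 < (∑ t : Fin n → Bool, ‖∑ i, signs t i • (if s i then v i else 0)‖) / 2 ^ n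
        then bernoulliWeight p s else 0) := by
  have h2n : (0:ℝ) < 2^n := by positivity
  exact markov_step (fun s => bernoulliWeight p s)
    (fun s => (∑ t : Fin n → Bool, ‖∑ i, signs t i • (if s i then v i else 0)‖) / 2 ^ n)
    ((∑ s : Fin n → Bool, ‖∑ i, signs s i • v i‖) / 2 ^ n) p hp0
    (fun s => bernoulliWeight_nonneg hp0.le hp1 s)
    (sum_bernoulliWeight p)
    (fun s => div_le_div_of_nonneg_right (contraction v s) h2n.le)
    (jensen_lower v hp0 hp1) hbig
end
end

section
/- Let X and Y be symmetric random vectors with values in a real separable Banach space E and let κ, λ ≥ 1. If for every continuous norm ‖·‖ on E one has P(‖X‖ > 1) ≤ κ P(λ‖Y‖ > 1), then for every closed, convex, symmetric set K ⊆ E one has P(X ∉ K) ≤ κ P(λY ∉ K). -/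
open MeasureTheory ProbabilityTheory
open scoped ENNReal BigOperators

noncomputable section

section Aux

variable {E : Type*} [NormedAddCommGroup E] [NormedSpace ℝ E]

/-- Iterated max of finitely many functionals with a small multiple of the norm. -/
def NF (F : ℕ → E →L[ℝ] ℝ) (δ : ℝ) : ℕ → E → ℝ
  | 0 => fun x => δ * ‖x‖
  | (n + 1) => fun x => max (NF F δ n x) |F n x|

lemma NF_isContNorm (F : ℕ → E →L[ℝ] ℝ) {δ : ℝ} (hδ : 0 < δ) (n : ℕ) :
    IsContNorm (NF F δ n) := by
  induction n with
  | zero =>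
    refine ⟨continuous_const.mul continuous_norm, ?_, ?_, ?_⟩
    · intro x y
      simp only [NF]
      calc δ * ‖x + y‖ ≤ δ * (‖x‖ + ‖y‖) := by
            exact mul_le_mul_of_nonneg_left (norm_add_le x y) hδ.le
        _ = δ * ‖x‖ + δ * ‖y‖ := by ring
    · intro c x
      simp only [NF, norm_smul, Real.norm_eq_abs]
      ring
    · intro x hx
      simp only [NF] at hx
      have : ‖x‖ = 0 := by
        rcases mul_eq_zero.mp hx with h | h
        · exact absurd h hδ.ne'
        · exact h
      exact norm_eq_zero.mp this
  | succ n ih =>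
    obtain ⟨hc, htri, hhom, hdef⟩ := ih
    refine ⟨hc.max ((F n).continuous.abs), ?_, ?_, ?_⟩
    · intro x y
      simp only [NF]
      refine max_le ?_ ?_
      · exact (htri x y).trans (add_le_add (le_max_left _ _) (le_max_left _ _))
      · have : |F n (x + y)| ≤ |F n x| + |F n y| := by
          rw [map_add]; exact abs_add_le _ _
        exact this.trans (add_le_add (le_max_right _ _) (le_max_right _ _))
    · intro c x
      simp only [NF]
      rw [hhom, _root_.map_smul, smul_eq_mul, abs_mul, ← mul_max_of_nonneg _ _ (abs_nonneg c)]
    · intro x hx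
      simp only [NF] at hx
      have h0 : 0 ≤ NF F δ n x := by
        have := hhom 0 x
        simp only [zero_smul, abs_zero, zero_mul] at this
        -- NF F δ n 0 = 0; use triangle to get nonneg
        have h2 := htri x (-x)
        have h3 : NF F δ n (x + -x) = 0 := by
          rw [add_neg_cancel]
          have := hhom 0 0
          simpa using this
        have h4 : NF F δ n (-x) = NF F δ n x := by
          have := hhom (-1) x
          simpa using this
        nlinarith
      have : NF F δ n x = 0 := le_antisymm (hx ▸ le_max_left _ _) h0
      exact hdef x this

lemma NF_lt_iff (F : ℕ → E →L[ℝ] ℝ) (δ : ℝ) (n : ℕ) (x : E) (t : ℝ) :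
    t < NF F δ n x ↔ t < δ * ‖x‖ ∨ ∃ i < n, t < |F i x| := by
  induction n with
  | zero => simp [NF]
  | succ n ih =>
    simp only [NF, lt_max_iff, ih, Nat.lt_succ_iff_lt_or_eq]
    constructor
    · rintro ((h | ⟨i, hi, h⟩) | h)
      · exact Or.inl h
      · exact Or.inr ⟨i, Or.inl hi, h⟩
      · exact Or.inr ⟨n, Or.inr rfl, h⟩
    · rintro (h | ⟨i, hi | rfl, h⟩)
      · exact Or.inl (Or.inl h)
      · exact Or.inl (Or.inr ⟨i, hi, h⟩)
      · exact Or.inr h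

end Aux

/-- **Equivalence of the two forms of domination.** If `P(N(X) > 1) ≤ κ P(λ N(Y) > 1)` for
every continuous norm `N` on `E`, then `P(X ∉ K) ≤ κ P(λ Y ∉ K)` for every closed convex
symmetric set `K ⊆ E`. -/
theorem norm_domination_implies_convex_domination
    {Ω E : Type*} [MeasurableSpace Ω] [NormedAddCommGroup E] [NormedSpace ℝ E]
    [CompleteSpace E] [TopologicalSpace.SeparableSpace E] [MeasurableSpace E] [BorelSpace E]
    (μ : Measure Ω) [IsProbabilityMeasure μ]
    (X Y : Ω → E) (hXmeas : Measurable X) (hYmeas : Measurable Y)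
    (hXsymm : IsSymmetricRV μ X) (hYsymm : IsSymmetricRV μ Y)
    (κ lam : ℝ) (hκ : 1 ≤ κ) (hlam : 1 ≤ lam)
    (hdom : ∀ N : E → ℝ, IsContNorm N →
      μ {ω | 1 < N (X ω)} ≤ ENNReal.ofReal κ * μ {ω | 1 < lam * N (Y ω)}) :
    ∀ K : Set E, IsClosed K → Convex ℝ K → K = -K →
      μ {ω | X ω ∉ K} ≤ ENNReal.ofReal κ * μ {ω | lam • Y ω ∉ K} := by
  intro K hKclosed hKconv hKsymm
  have hlam0 : (0:ℝ) < lam := lt_of_lt_of_le one_pos hlam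
  by_cases hKne : K.Nonempty
  swap
  · -- K is empty
    have hK : K = ∅ := Set.not_nonempty_iff_eq_empty.mp hKne
    subst hK
    simp only [Set.mem_empty_iff_false, not_false_eq_true, Set.setOf_true]
    rw [measure_univ, mul_one]
    exact ENNReal.one_le_ofReal.mpr hκ
  -- 0 ∈ K
  have h0K : (0:E) ∈ K := by
    obtain ⟨x, hx⟩ := hKne
    have hx' : -x ∈ K := by rw [hKsymm]; exact Set.neg_mem_neg.mpr hx
    have := hKconv hx hx' (by norm_num : (0:ℝ) ≤ 1/2) (by norm_num : (0:ℝ) ≤ 1/2) (by norm_num)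
    simpa using this
  by_cases hKcne : Kᶜ.Nonempty
  swap
  · -- K = univ
    have hK : Kᶜ = ∅ := Set.not_nonempty_iff_eq_empty.mp hKcne
    have hKu : K = Set.univ := by
      rw [← Set.compl_empty, ← hK, compl_compl]
    subst hKu
    simp
  -- separation functionals
  have hsep : ∀ x : E, x ∉ K → ∃ g : E →L[ℝ] ℝ, (∀ a ∈ K, |g a| ≤ 1) ∧ 1 < |g x| := by
    intro x hx
    obtain ⟨f, u, hfa, hux⟩ := geometric_hahn_banach_closed_point hKconv hKclosed hx
    have hu : 0 < u := by
      have := hfa 0 h0K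
      simpa using this
    refine ⟨u⁻¹ • f, ?_, ?_⟩
    · intro a ha
      have ha' : -a ∈ K := by rw [hKsymm]; exact Set.neg_mem_neg.mpr ha
      have h1 : f a < u := hfa a ha
      have h2 : f (-a) < u := hfa _ ha'
      rw [map_neg] at h2
      have hb : |f a| ≤ u := abs_le.mpr ⟨by linarith, h1.le⟩
      simp only [ContinuousLinearMap.coe_smul', Pi.smul_apply, smul_eq_mul, abs_mul,
        abs_inv, abs_of_pos hu]
      rw [inv_mul_le_iff₀ hu, mul_one]
      exact hb
    · simp only [ContinuousLinearMap.coe_smul', Pi.smul_apply, smul_eq_mul, abs_mul,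
        abs_inv, abs_of_pos hu]
      have : 1 < u⁻¹ * f x := by
        rw [lt_inv_mul_iff₀ hu, mul_one]
        exact hux
      calc 1 < u⁻¹ * f x := this
        _ ≤ u⁻¹ * |f x| := by
            exact mul_le_mul_of_nonneg_left (le_abs_self _) (inv_pos.mpr hu).le
  choose G hGK hGx using fun x : ↥Kᶜ => hsep x x.2
  set U : ↥Kᶜ → Set E := fun x => {y | 1 < |G x y|} with hU
  have hUopen : ∀ x, IsOpen (U x) := by
    intro x
    exact isOpen_lt continuous_const ((G x).continuous.abs)
  have hUcover : ⋃ x, U x = Kᶜ := by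
    apply Set.Subset.antisymm
    · rintro y hy
      simp only [Set.mem_iUnion] at hy
      obtain ⟨x, hx⟩ := hy
      intro hyK
      exact absurd (hGK x y hyK) (not_le.mpr hx)
    · intro y hy
      exact Set.mem_iUnion.mpr ⟨⟨y, hy⟩, hGx ⟨y, hy⟩⟩
  obtain ⟨T, hTc, hTU⟩ := TopologicalSpace.isOpen_iUnion_countable U hUopen
  have hTne : T.Nonempty := by
    by_contra h
    rw [Set.not_nonempty_iff_eq_empty] at h
    rw [h] at hTU
    simp only [Set.mem_empty_iff_false, Set.iUnion_of_empty, Set.iUnion_false,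
      Set.iUnion_empty] at hTU
    rw [hUcover] at hTU
    exact hKcne.ne_empty hTU.symm
  obtain ⟨e, he⟩ := hTc.exists_eq_range hTne
  set F : ℕ → E →L[ℝ] ℝ := fun i => G (e i) with hF
  have hcover : Kᶜ = ⋃ i, {y | 1 < |F i y|} := by
    rw [← hUcover, ← hTU, he, Set.biUnion_range]
  have hFK : ∀ i, ∀ a ∈ K, |F i a| ≤ 1 := fun i => hGK (e i)
  -- tightness
  set s : ℕ → Set Ω := fun k => {ω | (k:ℝ) < lam * ‖Y ω‖} with hs
  have hsmeas : ∀ k, MeasurableSet (s k) :=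
    fun k => measurableSet_lt measurable_const ((hYmeas.norm).const_mul lam)
  have hsanti : Antitone s := by
    intro k k' hkk' ω hω
    simp only [hs, Set.mem_setOf_eq] at hω ⊢
    exact lt_of_le_of_lt (by exact_mod_cast hkk') hω
  have hsempty : ⋂ k, s k = ∅ := by
    ext ω
    simp only [Set.mem_iInter, Set.mem_empty_iff_false, iff_false, not_forall]
    obtain ⟨k, hk⟩ := exists_nat_gt (lam * ‖Y ω‖)
    exact ⟨k, by simp [hs, not_lt.mpr hk.le]⟩
  have hstend : Filter.Tendsto (fun k => μ (s k)) Filter.atTop (nhds 0) := by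
    have := tendsto_measure_iInter_atTop (μ := μ)
      (fun k => (hsmeas k).nullMeasurableSet) hsanti ⟨0, measure_ne_top μ _⟩
    rw [hsempty] at this
    simpa [Function.comp_def] using this
  -- the increasing approximation of the event X ∉ K
  set A : ℕ → Set Ω := fun n => {ω | ∃ i < n, 1 < |F i (X ω)|} with hA
  have hAmono : Monotone A := by
    intro n n' hnn' ω ⟨i, hi, h⟩
    exact ⟨i, lt_of_lt_of_le hi hnn', h⟩
  have hAU : ⋃ n, A n = {ω | X ω ∉ K} := by
    ext ω
    simp only [Set.mem_iUnion, hA, Set.mem_setOf_eq]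
    constructor
    · rintro ⟨n, i, hi, h⟩
      intro hXK
      exact absurd (hFK i _ hXK) (not_le.mpr h)
    · intro hXK
      have : X ω ∈ Kᶜ := hXK
      rw [hcover] at this
      obtain ⟨i, hi⟩ := Set.mem_iUnion.mp this
      exact ⟨i + 1, i, Nat.lt_succ_self i, hi⟩
  have hμA : μ {ω | X ω ∉ K} = ⨆ n, μ (A n) := by
    rw [← hAU]
    exact Directed.measure_iUnion (hAmono.directed_le)
  rw [hμA]
  refine iSup_le fun n => ?_
  -- fix n; prove the bound with an ε of room
  refine ENNReal.le_of_forall_pos_le_add fun ε hε hlt => ?_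
  have hκ0 : ENNReal.ofReal κ ≠ 0 := by
    simp only [ne_eq, ENNReal.ofReal_eq_zero, not_le]
    linarith
  have hκtop : ENNReal.ofReal κ ≠ ⊤ := ENNReal.ofReal_ne_top
  have hεκpos : (0:ℝ≥0∞) < (ε : ℝ≥0∞) / ENNReal.ofReal κ :=
    ENNReal.div_pos (by exact_mod_cast hε.ne') hκtop
  obtain ⟨m, hm⟩ := (hstend.eventually_lt_const hεκpos).exists
  set δ : ℝ := ((m:ℝ) + 1)⁻¹ with hδdef
  have hδ : 0 < δ := by positivity
  have hN := NF_isContNorm F hδ n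
  have key1 : A n ⊆ {ω | 1 < NF F δ n (X ω)} := by
    rintro ω ⟨i, hi, h⟩
    exact (NF_lt_iff F δ n (X ω) 1).mpr (Or.inr ⟨i, hi, h⟩)
  have key2 : {ω | 1 < lam * NF F δ n (Y ω)} ⊆ {ω | lam • Y ω ∉ K} ∪ s m := by
    intro ω hω
    simp only [Set.mem_setOf_eq] at hω
    have h2 : lam⁻¹ < NF F δ n (Y ω) := by
      have := (mul_lt_mul_iff_right₀ (inv_pos.mpr hlam0)).mpr hω
      rwa [mul_one, inv_mul_cancel_left₀ hlam0.ne'] at this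
    rcases (NF_lt_iff F δ n (Y ω) lam⁻¹).mp h2 with h | ⟨i, hi, h⟩
    · right
      simp only [hs, Set.mem_setOf_eq]
      have h3 : 1 < lam * (δ * ‖Y ω‖) := by
        have := mul_lt_mul_of_pos_left h hlam0
        rwa [mul_inv_cancel₀ hlam0.ne'] at this
      have h4 := mul_lt_mul_of_pos_left h3 (show (0:ℝ) < (m:ℝ) + 1 by positivity)
      rw [mul_one] at h4
      have hδm : ((m:ℝ) + 1) * δ = 1 := mul_inv_cancel₀ (by positivity)
      calc (m:ℝ) < (m:ℝ) + 1 := lt_add_one _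
        _ < ((m:ℝ) + 1) * (lam * (δ * ‖Y ω‖)) := h4
        _ = (((m:ℝ) + 1) * δ) * (lam * ‖Y ω‖) := by ring
        _ = lam * ‖Y ω‖ := by rw [hδm, one_mul]
    · left
      intro hYK
      have h5 : |F i (lam • Y ω)| ≤ 1 := hFK i _ hYK
      rw [_root_.map_smul, smul_eq_mul, abs_mul, abs_of_pos hlam0] at h5
      have h6 : 1 < lam * |F i (Y ω)| := by
        have := (mul_lt_mul_iff_right₀ hlam0).mpr h
        rwa [mul_inv_cancel₀ hlam0.ne'] at this
      exact absurd h5 (not_le.mpr h6)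
  calc μ (A n) ≤ μ {ω | 1 < NF F δ n (X ω)} := measure_mono key1
    _ ≤ ENNReal.ofReal κ * μ {ω | 1 < lam * NF F δ n (Y ω)} := hdom _ hN
    _ ≤ ENNReal.ofReal κ * (μ {ω | lam • Y ω ∉ K} + μ (s m)) := by
        gcongr
        exact (measure_mono key2).trans (measure_union_le _ _)
    _ = ENNReal.ofReal κ * μ {ω | lam • Y ω ∉ K} + ENNReal.ofReal κ * μ (s m) := by
        rw [mul_add]
    _ ≤ ENNReal.ofReal κ * μ {ω | lam • Y ω ∉ K} + ε := by
        gcongr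
        calc ENNReal.ofReal κ * μ (s m) ≤ ENNReal.ofReal κ * ((ε : ℝ≥0∞) / ENNReal.ofReal κ) :=
              mul_le_mul_right hm.le _
          _ = ε := ENNReal.mul_div_cancel hκ0 hκtop
end
end

section
/- Let X_1,…,X_n be i.i.d. symmetric random vectors in a real separable Banach space E, and let a = (a_1,…,a_n) and b = (b_1,…,b_n) be sequences of real numbers such that a is majorised by b. Then for every continuous convex function φ: E → ℝ for which the expectations below exist, E φ( ∑_{i=1}^n a_i X_i ) ≤ E φ( ∑_{i=1}^n b_i X_i ). -/
open MeasureTheory ProbabilityTheory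
open scoped ENNReal BigOperators

noncomputable section

/-- `a` is majorised by `b`: every partial sum of `a` over a set of `k` indices is
bounded by the sum of `b` over some set of `k` indices (equivalently, the sums of the `k`
largest entries compare), and the total sums coincide. -/
def Majorizes {n : ℕ} (a b : Fin n → ℝ) : Prop :=
  (∀ s : Finset (Fin n), ∃ t : Finset (Fin n), t.card = s.card ∧ ∑ i ∈ s, a i ≤ ∑ i ∈ t, b i)
  ∧ ∑ i, a i = ∑ i, b i

open Finset
lemma finStrictMono_le {m n : ℕ} (f : Fin m → Fin n) (hf : StrictMono f) :
    ∀ k : Fin m, (k : ℕ) ≤ (f k : ℕ) := by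
  intro ⟨j, hj⟩
  induction j with
  | zero => exact Nat.zero_le _
  | succ j ih =>
    have hj' : j < m := Nat.lt_of_succ_lt hj
    have h1 : (f ⟨j, hj'⟩ : ℕ) < (f ⟨j + 1, hj⟩ : ℕ) := hf (by simp [Fin.lt_def])
    exact Nat.succ_le_of_lt (lt_of_le_of_lt (ih hj') h1)

lemma sum_le_topk_antitone {n : ℕ} (h : Fin n → ℝ) (hh : Antitone h) (s : Finset (Fin n)) :
    ∑ i ∈ s, h i ≤ ∑ j ∈ range s.card, (fun j => if hj : j < n then h ⟨j, hj⟩ else 0) j := by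
  classical
  have hm : s.card ≤ n := by
    simpa using Finset.card_le_card (Finset.subset_univ s)
  have h1 : ∑ i ∈ s, h i = ∑ k : Fin s.card, h (s.orderEmbOfFin rfl k) := by
    rw [← Finset.sum_attach s h]
    exact Fintype.sum_equiv (s.orderIsoOfFin rfl).toEquiv.symm _ _
      (by intro x; simp [← Finset.coe_orderIsoOfFin_apply])
  rw [h1, ← Fin.sum_univ_eq_sum_range]
  refine Finset.sum_le_sum fun k _ => ?_
  have hk : (k : ℕ) < n := lt_of_lt_of_le k.2 hm
  simp only [hk, dif_pos]
  exact hh (finStrictMono_le (s.orderEmbOfFin rfl) (s.orderEmbOfFin rfl).strictMono k)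

lemma abel_ineq (d γ : ℕ → ℝ) (n : ℕ) (hd : ∀ i, i + 1 < n → d (i + 1) ≤ d i)
    (hG : ∀ k, k ≤ n → 0 ≤ ∑ i ∈ range k, γ i) :
    ∀ m, m ≤ n → 0 < m → d (m - 1) * ∑ i ∈ range m, γ i ≤ ∑ i ∈ range m, d i * γ i := by
  intro m
  induction m with
  | zero => intro _ h; exact absurd h (lt_irrefl 0)
  | succ m ih =>
    intro hmn _
    rcases Nat.eq_zero_or_pos m with rfl | hm
    · simp
    have hmn' : m ≤ n := Nat.le_of_succ_le hmn
    have hdm : d m ≤ d (m - 1) := by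
      have := hd (m - 1) (by omega)
      rwa [Nat.sub_add_cancel hm] at this
    have hGm := hG m hmn'
    have ihm := ih hmn' hm
    rw [Finset.sum_range_succ, Finset.sum_range_succ]
    have : d m * (∑ i ∈ range m, γ i) ≤ d (m - 1) * (∑ i ∈ range m, γ i) :=
      mul_le_mul_of_nonneg_right hdm hGm
    have hms : m + 1 - 1 = m := rfl
    rw [hms, mul_add]
    nlinarith [ihm]

lemma weighted_sum_ineq (d α β : ℕ → ℝ) (n : ℕ) (hd : ∀ i, i + 1 < n → d (i + 1) ≤ d i)
    (hAB : ∀ k, k ≤ n → ∑ i ∈ range k, α i ≤ ∑ i ∈ range k, β i)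
    (heq : ∑ i ∈ range n, α i = ∑ i ∈ range n, β i) :
    ∑ i ∈ range n, d i * α i ≤ ∑ i ∈ range n, d i * β i := by
  rcases Nat.eq_zero_or_pos n with rfl | hn
  · simp
  have key := abel_ineq d (fun i => β i - α i) n hd
    (fun k hk => by
      have := hAB k hk
      simp only [Finset.sum_sub_distrib]
      linarith) n le_rfl hn
  have h0 : ∑ i ∈ range n, (β i - α i) = 0 := by
    simp only [Finset.sum_sub_distrib]; linarith
  rw [h0, mul_zero] at key
  have h1 : ∑ i ∈ range n, d i * (β i - α i)
      = ∑ i ∈ range n, d i * β i - ∑ i ∈ range n, d i * α i := by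
    simp [mul_sub, Finset.sum_sub_distrib]
  linarith [key, h1]

lemma sum_le_topk {n : ℕ} (g : Fin n → ℝ) (π : Equiv.Perm (Fin n))
    (hg : Antitone (fun i => g (π i))) (t : Finset (Fin n)) :
    ∑ i ∈ t, g i ≤ ∑ j ∈ range t.card, (fun j => if hj : j < n then g (π ⟨j, hj⟩) else 0) j := by
  classical
  have himg : ∑ i ∈ t.image π.symm, g (π i) = ∑ i ∈ t, g i := by
    rw [Finset.sum_image (fun x _ y _ h => π.symm.injective h)]
    simp
  have hcard : (t.image π.symm).card = t.card :=
    Finset.card_image_of_injective _ π.symm.injective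
  have := sum_le_topk_antitone (fun i => g (π i)) hg (t.image π.symm)
  rw [himg, hcard] at this
  exact this

/-- Key linear-functional inequality: if `a` is majorised by `b`, then for any
coefficient vector `c` there is a permutation `σ` with `∑ c i * a i ≤ ∑ c i * b (σ i)`. -/
lemma key_perm {n : ℕ} {a b : Fin n → ℝ} (hmaj : Majorizes a b) (c : Fin n → ℝ) :
    ∃ σ : Equiv.Perm (Fin n), ∑ i, c i * a i ≤ ∑ i, c i * b (σ i) := by
  classical
  set ρ := Tuple.sort (fun i => -c i) with hρ
  set π := Tuple.sort (fun i => -b i) with hπ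
  have hcρ : ∀ i j : Fin n, i ≤ j → c (ρ j) ≤ c (ρ i) := by
    intro i j hij
    have := Tuple.monotone_sort (fun i => -c i) hij
    simpa using this
  have hbπ : Antitone (fun i => b (π i)) := by
    intro i j hij
    have := Tuple.monotone_sort (fun i => -b i) hij
    simpa using this
  -- extended sequences on ℕ
  set d : ℕ → ℝ := fun j => if hj : j < n then c (ρ ⟨j, hj⟩) else 0 with hdd
  set α : ℕ → ℝ := fun j => if hj : j < n then a (ρ ⟨j, hj⟩) else 0 with hαα
  set β : ℕ → ℝ := fun j => if hj : j < n then b (π ⟨j, hj⟩) else 0 with hββ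
  have hd : ∀ i, i + 1 < n → d (i + 1) ≤ d i := by
    intro i hi
    have hi' : i < n := Nat.lt_of_succ_lt hi
    simp only [hdd, hi, hi', dif_pos]
    exact hcρ ⟨i, hi'⟩ ⟨i + 1, hi⟩ (by simp [Fin.le_def])
  have hAB : ∀ k, k ≤ n → ∑ i ∈ range k, α i ≤ ∑ i ∈ range k, β i := by
    intro k hk
    -- the set of the first k elements under ρ
    set s : Finset (Fin n) :=
      Finset.image (fun j : Fin k => ρ (Fin.castLE hk j)) Finset.univ with hs
    have hinj : Function.Injective (fun j : Fin k => ρ (Fin.castLE hk j)) :=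
      fun x y hxy => Fin.castLE_injective hk (ρ.injective hxy)
    have hscard : s.card = k := by
      rw [hs, Finset.card_image_of_injective _ hinj, Finset.card_univ, Fintype.card_fin]
    have hsum_s : ∑ i ∈ s, a i = ∑ i ∈ range k, α i := by
      rw [hs, Finset.sum_image (by
        intro x _ y _ hxy
        exact Fin.castLE_injective hk (ρ.injective hxy))]
      rw [← Fin.sum_univ_eq_sum_range α k]
      refine Finset.sum_congr rfl fun j _ => ?_
      have hj : (j : ℕ) < n := lt_of_lt_of_le j.2 hk
      simp only [hαα, hj, dif_pos]
      rfl
    obtain ⟨t, htcard, hts⟩ := hmaj.1 s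
    have htop := sum_le_topk b π hbπ t
    rw [htcard, hscard] at htop
    calc ∑ i ∈ range k, α i = ∑ i ∈ s, a i := hsum_s.symm
      _ ≤ ∑ i ∈ t, b i := hts
      _ ≤ ∑ j ∈ range k, β j := htop
  have heq : ∑ i ∈ range n, α i = ∑ i ∈ range n, β i := by
    have hA : ∑ i ∈ range n, α i = ∑ i, a i := by
      rw [← Fin.sum_univ_eq_sum_range α n]
      rw [show (∑ j : Fin n, α (j : ℕ)) = ∑ j : Fin n, a (ρ j) from
        Finset.sum_congr rfl fun j _ => by simp only [hαα, j.2, dif_pos]]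
      exact Equiv.sum_comp ρ a
    have hB : ∑ i ∈ range n, β i = ∑ i, b i := by
      rw [← Fin.sum_univ_eq_sum_range β n]
      rw [show (∑ j : Fin n, β (j : ℕ)) = ∑ j : Fin n, b (π j) from
        Finset.sum_congr rfl fun j _ => by simp only [hββ, j.2, dif_pos]]
      exact Equiv.sum_comp π b
    rw [hA, hB]; exact hmaj.2
  have main := weighted_sum_ineq d α β n hd hAB heq
  refine ⟨ρ.symm.trans π, ?_⟩
  have hL : ∑ i, c i * a i = ∑ i ∈ range n, d i * α i := by
    rw [← Equiv.sum_comp ρ (fun i => c i * a i), ← Fin.sum_univ_eq_sum_range (fun i => d i * α i) n]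
    refine Finset.sum_congr rfl fun j _ => by simp only [hdd, hαα, j.2, dif_pos]
  have hR : ∑ i, c i * b ((ρ.symm.trans π) i) = ∑ i ∈ range n, d i * β i := by
    rw [← Equiv.sum_comp ρ (fun i => c i * b ((ρ.symm.trans π) i)),
      ← Fin.sum_univ_eq_sum_range (fun i => d i * β i) n]
    refine Finset.sum_congr rfl fun j _ => ?_
    simp only [hdd, hββ, j.2, dif_pos, Equiv.trans_apply, Equiv.symm_apply_apply]
  rw [hL, hR]; exact main

/-- A majorised vector is a convex combination of permutations of the majorising one. -/
lemma majorizes_exists_weights {n : ℕ} {a b : Fin n → ℝ} (hmaj : Majorizes a b) :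
    ∃ w : Equiv.Perm (Fin n) → ℝ, (∀ σ, 0 ≤ w σ) ∧ ∑ σ, w σ = 1 ∧
      ∀ i, a i = ∑ σ, w σ * b (σ i) := by
  classical
  set R : Set (Fin n → ℝ) := Set.range (fun σ : Equiv.Perm (Fin n) => fun i => b (σ i)) with hR
  have ha : a ∈ convexHull ℝ R := by
    by_contra hA
    have hfin : R.Finite := Set.finite_range _
    obtain ⟨f, u, hfu, hua⟩ := geometric_hahn_banach_closed_point
      (convex_convexHull ℝ R) (hfin.isClosed_convexHull ℝ) hA
    set c : Fin n → ℝ := fun i => f (Pi.single i 1) with hc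
    have hf : ∀ x : Fin n → ℝ, f x = ∑ i, c i * x i := by
      intro x
      conv_lhs => rw [← Finset.univ_sum_single x]
      rw [map_sum]
      refine Finset.sum_congr rfl fun i _ => ?_
      have hsingle : (Pi.single i (x i) : Fin n → ℝ)
          = x i • (Pi.single i (1 : ℝ) : Fin n → ℝ) := by
        rw [← Pi.single_smul, smul_eq_mul, mul_one]
      rw [hsingle, _root_.map_smul, smul_eq_mul, hc, mul_comm]
    obtain ⟨σ, hσ⟩ := key_perm hmaj c
    have h1 : f a ≤ f (fun i => b (σ i)) := by
      rw [hf, hf]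
      have h2 : ∑ i, c i * a i ≤ ∑ i, c i * b (σ i) := hσ
      simpa using h2
    have h3 : f (fun i => b (σ i)) < u :=
      hfu _ (subset_convexHull ℝ R (Set.mem_range_self σ))
    linarith
  rw [_root_.convexHull_eq] at ha
  obtain ⟨ι, t, w, z, hw0, hw1, hmem, hcm⟩ := ha
  rw [Finset.centerMass_eq_of_sum_1 _ _ hw1] at hcm
  set g : ι → Equiv.Perm (Fin n) := fun i =>
    if h : ∃ σ : Equiv.Perm (Fin n), z i = fun j => b (σ j) then h.choose else 1 with hg
  have hgz : ∀ i ∈ t, z i = fun j => b (g i j) := by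
    intro i hi
    obtain ⟨σ, hσ⟩ := hmem i hi
    have hex : ∃ σ : Equiv.Perm (Fin n), z i = fun j => b (σ j) := ⟨σ, hσ.symm⟩
    simp only [hg, dif_pos hex]
    exact hex.choose_spec
  refine ⟨fun σ => ∑ i ∈ t.filter (fun i => g i = σ), w i, ?_, ?_, ?_⟩
  · exact fun σ => Finset.sum_nonneg fun i hi => hw0 i (Finset.mem_filter.1 hi).1
  · rw [Finset.sum_fiberwise_of_maps_to (fun i _ => Finset.mem_univ (g i)) w]
    exact hw1
  · intro j
    have h1 : a j = ∑ i ∈ t, w i * z i j := by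
      rw [← hcm]
      simp [Finset.sum_apply]
    rw [h1, ← Finset.sum_fiberwise_of_maps_to (fun i _ => Finset.mem_univ (g i))
      (fun i => w i * z i j)]
    refine Finset.sum_congr rfl fun σ _ => ?_
    rw [Finset.sum_mul]
    refine Finset.sum_congr rfl fun i hi => ?_
    obtain ⟨hit, hgσ⟩ := Finset.mem_filter.1 hi
    rw [hgz i hit, hgσ]

/-- **Convex comparison for majorised weights.** For i.i.d. symmetric random vectors and
weight sequences `a ≺ b` (majorisation), `E φ(∑ aᵢ Xᵢ) ≤ E φ(∑ bᵢ Xᵢ)` for every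
continuous convex `φ : E → ℝ` for which both expectations exist. -/
theorem convex_comparison_of_majorization
    {Ω E : Type*} [MeasurableSpace Ω] [NormedAddCommGroup E] [NormedSpace ℝ E]
    [CompleteSpace E] [TopologicalSpace.SeparableSpace E] [MeasurableSpace E] [BorelSpace E]
    (μ : Measure Ω) [IsProbabilityMeasure μ] (n : ℕ)
    (X : Fin n → Ω → E) (hXmeas : ∀ i, Measurable (X i))
    (hXindep : iIndepFun X μ)
    (hXident : ∀ i j, Measure.map (X i) μ = Measure.map (X j) μ)
    (hXsymm : ∀ i, IsSymmetricRV μ (X i))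
    (a b : Fin n → ℝ) (hmaj : Majorizes a b)
    (φ : E → ℝ) (hφcont : Continuous φ) (hφconv : ConvexOn ℝ Set.univ φ)
    (hint_a : Integrable (fun ω => φ (∑ i, a i • X i ω)) μ)
    (hint_b : Integrable (fun ω => φ (∑ i, b i • X i ω)) μ) :
    ∫ ω, φ (∑ i, a i • X i ω) ∂μ ≤ ∫ ω, φ (∑ i, b i • X i ω) ∂μ := by

  classical
  haveI : SecondCountableTopology E := UniformSpace.secondCountable_of_separable E
  obtain ⟨w, hw0, hw1, hwa⟩ := majorizes_exists_weights hmaj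
  set ν : Fin n → Measure E := fun i => Measure.map (X i) μ with hν
  haveI hνprob : ∀ i, IsProbabilityMeasure (ν i) :=
    fun i => Measure.isProbabilityMeasure_map (hXmeas i).aemeasurable
  set T : Equiv.Perm (Fin n) → Ω → (Fin n → E) := fun σ ω i => X (σ i) ω with hT
  have hTmeas : ∀ σ, Measurable (T σ) := fun σ => measurable_pi_lambda _ fun i => hXmeas (σ i)
  have lawPerm : ∀ σ : Equiv.Perm (Fin n), Measure.map (T σ) μ = Measure.pi ν := by
    intro σ
    refine (Measure.pi_eq fun s hs => ?_).symm
    rw [Measure.map_apply (hTmeas σ) (MeasurableSet.univ_pi hs)]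
    have hpre : T σ ⁻¹' (Set.univ.pi s) = ⋂ j, X j ⁻¹' s (σ.symm j) := by
      ext ω
      simp only [hT, Set.mem_preimage, Set.mem_pi, Set.mem_univ, true_implies, Set.mem_iInter]
      constructor
      · intro h j
        have := h (σ.symm j)
        simpa using this
      · intro h i
        have := h (σ i)
        simpa using this
    have hinter : (⋂ j, X j ⁻¹' s (σ.symm j)) = ⋂ j ∈ Finset.univ, X j ⁻¹' s (σ.symm j) := by
      simp
    rw [hpre, hinter, hXindep.measure_inter_preimage_eq_mul Finset.univ
      (sets := fun j => s (σ.symm j)) (fun j _ => hs (σ.symm j))]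
    have h1 : ∀ j, μ (X j ⁻¹' s (σ.symm j)) = ν (σ.symm j) (s (σ.symm j)) := by
      intro j
      rw [hν]
      simp only
      rw [hXident (σ.symm j) j, Measure.map_apply (hXmeas j) (hs _)]
    calc ∏ j, μ (X j ⁻¹' s (σ.symm j)) = ∏ j, ν (σ.symm j) (s (σ.symm j)) :=
          Finset.prod_congr rfl fun j _ => h1 j
      _ = ∏ i, ν i (s i) := Equiv.prod_comp σ.symm (fun i => ν i (s i))
  have hFcont : ∀ c : Fin n → ℝ, Continuous (fun y : Fin n → E => φ (∑ i, c i • y i)) :=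
    fun c => hφcont.comp (continuous_finset_sum _ fun i _ =>
      ((continuous_apply i).const_smul (c i)))
  -- transfer of integrals to the product space
  have hInt : ∀ (σ : Equiv.Perm (Fin n)) (c : Fin n → ℝ),
      ∫ ω, φ (∑ i, c i • X (σ i) ω) ∂μ
        = ∫ y, φ (∑ i, c i • y i) ∂(Measure.pi ν) := by
    intro σ c
    have h := integral_map (μ := μ) (hTmeas σ).aemeasurable
      ((hFcont c).aestronglyMeasurable (μ := Measure.map (T σ) μ))
    rw [lawPerm σ] at h
    exact h.symm
  -- transfer of integrability
  have hIntb : ∀ σ : Equiv.Perm (Fin n),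
      Integrable (fun ω => φ (∑ i, b i • X (σ i) ω)) μ := by
    intro σ
    have key : ∀ τ : Equiv.Perm (Fin n),
        Integrable (fun ω => φ (∑ i, b i • X (τ i) ω)) μ
          ↔ Integrable (fun y : Fin n → E => φ (∑ i, b i • y i)) (Measure.pi ν) := by
      intro τ
      rw [← lawPerm τ, integrable_map_measure
        ((hFcont b).aestronglyMeasurable (μ := Measure.map (T τ) μ)) (hTmeas τ).aemeasurable]
      rfl
    rw [key σ, ← key 1]
    simpa using hint_b
  have hIb : ∀ σ : Equiv.Perm (Fin n),
      Integrable (fun ω => φ (∑ i, b (σ i) • X i ω)) μ := by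
    intro σ
    have hrw : (fun ω => φ (∑ i, b (σ i) • X i ω))
        = fun ω => φ (∑ j, b j • X (σ.symm j) ω) := by
      funext ω
      congr 1
      have h := Equiv.sum_comp σ (fun j => b j • X (σ.symm j) ω)
      simp only [Equiv.symm_apply_apply] at h
      exact h
    rw [hrw]
    exact hIntb σ.symm
  have hEq : ∀ σ : Equiv.Perm (Fin n),
      ∫ ω, φ (∑ i, b (σ i) • X i ω) ∂μ = ∫ ω, φ (∑ i, b i • X i ω) ∂μ := by
    intro σ
    have hrw : (fun ω => φ (∑ i, b (σ i) • X i ω))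
        = fun ω => φ (∑ j, b j • X (σ.symm j) ω) := by
      funext ω
      congr 1
      have h := Equiv.sum_comp σ (fun j => b j • X (σ.symm j) ω)
      simp only [Equiv.symm_apply_apply] at h
      exact h
    have h2 := hInt σ.symm b
    have h3 := hInt 1 b
    simp only [Equiv.Perm.coe_one, id_eq] at h3
    rw [hrw, h2, ← h3]
  -- pointwise convexity bound
  have hpt : ∀ ω, φ (∑ i, a i • X i ω) ≤ ∑ σ, w σ * φ (∑ i, b (σ i) • X i ω) := by
    intro ω
    have hsum : ∑ i, a i • X i ω = ∑ σ, w σ • (∑ i, b (σ i) • X i ω) := by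
      calc ∑ i, a i • X i ω = ∑ i, (∑ σ, w σ * b (σ i)) • X i ω :=
            Finset.sum_congr rfl fun i _ => by rw [← hwa i]
        _ = ∑ i, ∑ σ, (w σ * b (σ i)) • X i ω :=
            Finset.sum_congr rfl fun i _ => by rw [Finset.sum_smul]
        _ = ∑ σ, ∑ i, (w σ * b (σ i)) • X i ω := Finset.sum_comm
        _ = ∑ σ, w σ • (∑ i, b (σ i) • X i ω) :=
            Finset.sum_congr rfl fun σ _ => by
              rw [Finset.smul_sum]
              exact Finset.sum_congr rfl fun i _ => mul_smul _ _ _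
    rw [hsum]
    have h := hφconv.map_sum_le (t := Finset.univ) (w := w)
      (p := fun σ => ∑ i, b (σ i) • X i ω)
      (fun σ _ => hw0 σ) (by simpa using hw1) (fun σ _ => Set.mem_univ _)
    simpa [smul_eq_mul] using h
  have hIsum : Integrable (fun ω => ∑ σ, w σ * φ (∑ i, b (σ i) • X i ω)) μ :=
    integrable_finset_sum _ fun σ _ => (hIb σ).const_mul (w σ)
  calc ∫ ω, φ (∑ i, a i • X i ω) ∂μ
      ≤ ∫ ω, ∑ σ, w σ * φ (∑ i, b (σ i) • X i ω) ∂μ :=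
        integral_mono hint_a hIsum hpt
    _ = ∑ σ, w σ * ∫ ω, φ (∑ i, b (σ i) • X i ω) ∂μ := by
        rw [integral_finset_sum _ fun σ _ => (hIb σ).const_mul (w σ)]
        exact Finset.sum_congr rfl fun σ _ => MeasureTheory.integral_const_mul _ _
    _ = ∑ σ, w σ * ∫ ω, φ (∑ i, b i • X i ω) ∂μ :=
        Finset.sum_congr rfl fun σ _ => by rw [hEq σ]
    _ = ∫ ω, φ (∑ i, b i • X i ω) ∂μ := by
        rw [← Finset.sum_mul, hw1, one_mul]
end
end

section
/- Let X_1,…,X_n be random vectors in a real separable Banach space (E,‖·‖) and let ε₁,…,ε_n be independent Rademacher signs (each uniform on {−1,1}) independent of the X_i. Then almost surely, E_ε (‖∑_{i=1}^n ε_i X_i‖ − 1)_+ ≤ 4 · P_ε( ‖∑_{i=1}^n ε_i X_i‖ > 1 ) · E_ε ‖∑_{i=1}^n ε_i X_i‖, where E_ε and P_ε denote expectation and probability over the signs only (conditionally on X_1,…,X_n) and u_+ = max{u,0}. -/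
open MeasureTheory ProbabilityTheory
open scoped ENNReal BigOperators Classical

noncomputable section

set_option linter.unusedSectionVars false

namespace KahaneAux

variable {E : Type*} [NormedAddCommGroup E] [NormedSpace ℝ E] {n : ℕ}

lemma signs_congr {s s' : Fin n → Bool} {i : Fin n} (h : s i = s' i) :
    signs s i = signs s' i := by simp [signs, h]

lemma signs_not {s s' : Fin n → Bool} {i : Fin n} (h : s' i = !(s i)) :
    signs s' i = - signs s i := by cases hs : s i <;> simp [signs, h, hs]

def T (x : Fin n → E) (s : Fin n → Bool) : E := ∑ i, signs s i • x i

def Sle (x : Fin n → E) (k : Fin n) (s : Fin n → Bool) : E :=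
  ∑ i ∈ Finset.univ.filter (fun i => i ≤ k), signs s i • x i

def Slt (x : Fin n → E) (k : Fin n) (s : Fin n → Bool) : E :=
  ∑ i ∈ Finset.univ.filter (fun i => i < k), signs s i • x i

def Qg (x : Fin n → E) (k : Fin n) (s : Fin n → Bool) : E :=
  ∑ i ∈ Finset.univ.filter (fun i => k < i), signs s i • x i

def Rge (x : Fin n → E) (k : Fin n) (s : Fin n → Bool) : E :=
  ∑ i ∈ Finset.univ.filter (fun i => k ≤ i), signs s i • x i

def Fst (x : Fin n → E) (k : Fin n) (s : Fin n → Bool) : Prop :=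
  1 < ‖Sle x k s‖ ∧ ∀ j < k, ‖Sle x j s‖ ≤ 1

variable (x : Fin n → E)

lemma card_cube : (Finset.univ : Finset (Fin n → Bool)).card = 2 ^ n := by
  simp [Finset.card_univ]

lemma Sle_congr {k : Fin n} {s s' : Fin n → Bool} (h : ∀ i ≤ k, s i = s' i) :
    Sle x k s = Sle x k s' := by
  refine Finset.sum_congr rfl fun i hi => ?_
  rw [Finset.mem_filter] at hi
  rw [signs_congr (h i hi.2)]

lemma Slt_congr {k : Fin n} {s s' : Fin n → Bool} (h : ∀ i < k, s i = s' i) :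
    Slt x k s = Slt x k s' := by
  refine Finset.sum_congr rfl fun i hi => ?_
  rw [Finset.mem_filter] at hi
  rw [signs_congr (h i hi.2)]

lemma Qg_congr {k : Fin n} {s s' : Fin n → Bool} (h : ∀ i, k < i → s i = s' i) :
    Qg x k s = Qg x k s' := by
  refine Finset.sum_congr rfl fun i hi => ?_
  rw [Finset.mem_filter] at hi
  rw [signs_congr (h i hi.2)]

lemma Rge_congr {k : Fin n} {s s' : Fin n → Bool} (h : ∀ i, k ≤ i → s i = s' i) :
    Rge x k s = Rge x k s' := by
  refine Finset.sum_congr rfl fun i hi => ?_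
  rw [Finset.mem_filter] at hi
  rw [signs_congr (h i hi.2)]

lemma Qg_neg {k : Fin n} {s s' : Fin n → Bool} (h : ∀ i, k < i → s' i = !(s i)) :
    Qg x k s' = - Qg x k s := by
  have : Qg x k s' = ∑ i ∈ Finset.univ.filter (fun i => k < i), -(signs s i • x i) := by
    refine Finset.sum_congr rfl fun i hi => ?_
    rw [Finset.mem_filter] at hi
    rw [signs_not (h i hi.2), neg_smul]
  rw [this, Finset.sum_neg_distrib, Qg]

lemma Fst_congr {k : Fin n} {s s' : Fin n → Bool} (h : ∀ i ≤ k, s i = s' i) :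
    Fst x k s ↔ Fst x k s' := by
  have hS : ∀ j ≤ k, Sle x j s = Sle x j s' := fun j hj =>
    Sle_congr x fun i hi => h i (le_trans hi hj)
  constructor <;> rintro ⟨h1, h2⟩
  · exact ⟨by rwa [← hS k le_rfl], fun j hj => by rw [← hS j hj.le]; exact h2 j hj⟩
  · exact ⟨by rwa [hS k le_rfl], fun j hj => by rw [hS j hj.le]; exact h2 j hj⟩

lemma Fst_unique {k k' : Fin n} {s : Fin n → Bool} (h : Fst x k s) (h' : Fst x k' s) :
    k = k' := by
  by_contra hne
  rcases lt_or_gt_of_ne hne with hlt | hlt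
  · exact absurd h.1 (not_lt.2 (h'.2 k hlt))
  · exact absurd h'.1 (not_lt.2 (h.2 k' hlt))

lemma Fst_exists {s : Fin n → Bool} (h : 1 < ‖T x s‖) : ∃ k, Fst x k s := by
  have hn : n ≠ 0 := by
    rintro rfl
    simp [T] at h
    linarith [h]
  let last : Fin n := ⟨n - 1, by omega⟩
  have hT : T x s = Sle x last s := by
    rw [T, Sle, Finset.filter_true_of_mem]
    intro i _
    show i ≤ last
    have := i.isLt
    simp only [Fin.le_def, last]
    omega
  have hne : (Finset.univ.filter (fun k : Fin n => 1 < ‖Sle x k s‖)).Nonempty := by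
    refine ⟨last, ?_⟩
    simp only [Finset.mem_filter, Finset.mem_univ, true_and]
    rwa [← hT]
  obtain ⟨k, hkF, hmin⟩ :=
    Finset.exists_min_image (Finset.univ.filter (fun k : Fin n => 1 < ‖Sle x k s‖)) id hne
  simp only [Finset.mem_filter, Finset.mem_univ, true_and] at hkF
  refine ⟨k, hkF, fun j hj => ?_⟩
  by_contra hle
  push_neg at hle
  have hjF : j ∈ Finset.univ.filter (fun k : Fin n => 1 < ‖Sle x k s‖) := by
    simp only [Finset.mem_filter, Finset.mem_univ, true_and]; exact hle
  exact absurd (hmin j hjF) (not_le.2 hj)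

lemma T_split (k : Fin n) (s : Fin n → Bool) : T x s = Slt x k s + Rge x k s := by
  have hfilter : Finset.univ.filter (fun i : Fin n => ¬ i < k)
      = Finset.univ.filter (fun i => k ≤ i) := by
    ext i; simp [not_lt]
  rw [T, Slt, Rge, ← hfilter, Finset.sum_filter_add_sum_filter_not]

lemma Rge_split (k : Fin n) (s : Fin n → Bool) :
    Rge x k s = signs s k • x k + Qg x k s := by
  have hfilter : Finset.univ.filter (fun i : Fin n => k ≤ i)
      = insert k (Finset.univ.filter (fun i => k < i)) := by
    ext i
    simp only [Finset.mem_filter, Finset.mem_univ, true_and, Finset.mem_insert]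
    constructor
    · intro hle
      rcases eq_or_lt_of_le hle with he | hlt
      · exact Or.inl he.symm
      · exact Or.inr hlt
    · rintro (rfl | hlt)
      · exact le_rfl
      · exact hlt.le
  rw [Rge, hfilter, Finset.sum_insert (by simp)]
  rfl

lemma Slt_le_one {k : Fin n} {s : Fin n → Bool} (h : Fst x k s) : ‖Slt x k s‖ ≤ 1 := by
  rcases Nat.eq_zero_or_pos k.val with hk | hk
  · have : Finset.univ.filter (fun i : Fin n => i < k) = ∅ := by
      ext i; simp [Fin.lt_def, hk]
    rw [Slt, this, Finset.sum_empty, norm_zero]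
    norm_num
  · let j : Fin n := ⟨k.val - 1, by omega⟩
    have hjk : j < k := by
      simp only [Fin.lt_def, j]; omega
    have hS : Slt x k s = Sle x j s := by
      rw [Slt, Sle]
      apply Finset.sum_congr _ (fun _ _ => rfl)
      ext i
      simp only [Finset.mem_filter, Finset.mem_univ, true_and, Fin.lt_def, Fin.le_def]
      show i.val < k.val ↔ i.val ≤ (j : ℕ)
      simp only [j]
      omega
    rw [hS]
    exact h.2 j hjk

lemma max_le_rge {k : Fin n} {s : Fin n → Bool} (h : Fst x k s) :
    max (‖T x s‖ - 1) 0 ≤ ‖Rge x k s‖ := by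
  refine max_le ?_ (norm_nonneg _)
  have h1 : ‖T x s‖ ≤ ‖Slt x k s‖ + ‖Rge x k s‖ := by
    rw [T_split x k s]; exact norm_add_le _ _
  have h2 := Slt_le_one x h
  linarith


def mle (k : Fin n) (s u : Fin n → Bool) : Fin n → Bool := fun i => if i ≤ k then s i else u i

def mlt (k : Fin n) (s u : Fin n → Bool) : Fin n → Bool := fun i => if i < k then s i else u i

def flipGT (k : Fin n) (u : Fin n → Bool) : Fin n → Bool := fun i => if k < i then !(u i) else u i

def flipc (k : Fin n) (u : Fin n → Bool) : Fin n → Bool := Function.update u k (!(u k))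

lemma mle_swap_invol (k : Fin n) :
    Function.Involutive
      (fun p : (Fin n → Bool) × (Fin n → Bool) => (mle k p.1 p.2, mle k p.2 p.1)) := by
  rintro ⟨s, u⟩
  simp only [Prod.mk.injEq]
  constructor <;> (funext i; simp only [mle]; by_cases h : i ≤ k <;> simp [h])

lemma mlt_swap_invol (k : Fin n) :
    Function.Involutive
      (fun p : (Fin n → Bool) × (Fin n → Bool) => (mlt k p.1 p.2, mlt k p.2 p.1)) := by
  rintro ⟨s, u⟩
  simp only [Prod.mk.injEq]
  constructor <;> (funext i; simp only [mlt]; by_cases h : i < k <;> simp [h])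

lemma flipGT_invol (k : Fin n) : Function.Involutive (flipGT (n := n) k) := by
  intro u; funext i; simp only [flipGT]; by_cases h : k < i <;> simp [h]

lemma flipc_invol (k : Fin n) : Function.Involutive (flipc (n := n) k) := by
  intro u; funext i
  simp only [flipc, Function.update_apply]
  by_cases h : i = k <;> simp [h]

lemma sum_signs_zero (i : Fin n) : ∑ v : Fin n → Bool, signs v i = 0 := by
  have h := Equiv.sum_comp (Function.Involutive.toPerm _ (flipc_invol (n := n) i))
    (fun v => signs v i)
  simp only [Function.Involutive.coe_toPerm] at h
  have h2 : ∀ v : Fin n → Bool, signs (flipc i v) i = - signs v i :=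
    fun v => signs_not (by simp [flipc, Function.update_apply])
  rw [Finset.sum_congr rfl (fun v _ => h2 v), Finset.sum_neg_distrib] at h
  linarith

lemma sum_Slt_zero (k : Fin n) : ∑ v : Fin n → Bool, Slt x k v = 0 := by
  show ∑ v : Fin n → Bool, ∑ i ∈ Finset.univ.filter (fun i => i < k), signs v i • x i = 0
  rw [Finset.sum_comm]
  refine Finset.sum_eq_zero fun i _ => ?_
  rw [← Finset.sum_smul, sum_signs_zero, zero_smul]

lemma nsmul_Rge (k : Fin n) (u : Fin n → Bool) :
    ∑ v : Fin n → Bool, T x (mlt k v u) = (2 ^ n : ℕ) • Rge x k u := by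
  have hv : ∀ v : Fin n → Bool, T x (mlt k v u) = Slt x k v + Rge x k u := by
    intro v
    rw [T_split x k (mlt k v u)]
    congr 1
    · exact Slt_congr x fun i hi => by simp [mlt, hi]
    · exact Rge_congr x fun i hi => by simp [mlt, not_lt.2 hi]
  rw [Finset.sum_congr rfl (fun v _ => hv v), Finset.sum_add_distrib, sum_Slt_zero, zero_add,
    Finset.sum_const, card_cube]

lemma jensen (k : Fin n) :
    ∑ u : Fin n → Bool, ‖Rge x k u‖ ≤ ∑ u : Fin n → Bool, ‖T x u‖ := by
  have h2n : (0 : ℝ) < 2 ^ n := by positivity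
  rw [← mul_le_mul_iff_of_pos_left h2n]
  have hpt : ∀ u : Fin n → Bool,
      (2 : ℝ) ^ n * ‖Rge x k u‖ ≤ ∑ v : Fin n → Bool, ‖T x (mlt k v u)‖ := by
    intro u
    have h := norm_sum_le Finset.univ (fun v : Fin n → Bool => T x (mlt k v u))
    rw [nsmul_Rge, ← Nat.cast_smul_eq_nsmul ℝ, norm_smul] at h
    have : ‖((2 ^ n : ℕ) : ℝ)‖ = (2 : ℝ) ^ n := by
      rw [Real.norm_eq_abs, abs_of_nonneg (by positivity)]
      push_cast; ring
    rwa [this] at h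
  calc (2 : ℝ) ^ n * ∑ u : Fin n → Bool, ‖Rge x k u‖
      = ∑ u : Fin n → Bool, (2 : ℝ) ^ n * ‖Rge x k u‖ := Finset.mul_sum _ _ _
    _ ≤ ∑ u : Fin n → Bool, ∑ v : Fin n → Bool, ‖T x (mlt k v u)‖ :=
        Finset.sum_le_sum fun u _ => hpt u
    _ = (2 : ℝ) ^ n * ∑ u : Fin n → Bool, ‖T x u‖ := ?_
  rw [Finset.sum_comm, ← Fintype.sum_prod_type']
  have hb := Equiv.sum_comp (Function.Involutive.toPerm _ (mlt_swap_invol (n := n) k))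
      (fun p : (Fin n → Bool) × (Fin n → Bool) => ‖T x p.1‖)
  simp only [Function.Involutive.coe_toPerm] at hb
  rw [show (∑ p : (Fin n → Bool) × (Fin n → Bool), ‖T x (mlt k p.1 p.2)‖)
      = ∑ p : (Fin n → Bool) × (Fin n → Bool), ‖T x p.1‖ from hb]
  rw [Fintype.sum_prod_type]
  rw [show (∑ v : Fin n → Bool, ∑ _u : Fin n → Bool, ‖T x ((v, _u) : (Fin n → Bool) × (Fin n → Bool)).1‖)
      = ∑ v : Fin n → Bool, (2 : ℝ) ^ n * ‖T x v‖ from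
    Finset.sum_congr rfl fun v _ => by
      simp only [Finset.sum_const, card_cube, nsmul_eq_mul]; push_cast; ring]
  rw [← Finset.mul_sum]


lemma norm_pair_neg (a z : E) : ‖-a + z‖ + ‖-a + -z‖ = ‖a + z‖ + ‖a - z‖ := by
  have e1 : -a + z = -(a - z) := by abel
  have e2 : -a + -z = -(a + z) := by abel
  rw [e1, e2, norm_neg, norm_neg, add_comm]

lemma norm_pair_pos (a z : E) : ‖a + z‖ + ‖a + -z‖ = ‖a + z‖ + ‖a - z‖ := by
  have e : a + -z = a - z := by abel
  rw [e]

lemma updsum (k : Fin n) (b : Bool) :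
    ∑ u : Fin n → Bool, ‖Rge x k (Function.update u k b)‖
      = ∑ u : Fin n → Bool, ‖Rge x k u‖ := by
  have hQupd : ∀ (w : Fin n → Bool) (c : Bool), Qg x k (Function.update w k c) = Qg x k w :=
    fun w c => (Qg_congr x fun i hi => by
      rw [Function.update_apply, if_neg hi.ne']).symm
  have hRupd : ∀ (w : Fin n → Bool) (c : Bool),
      Rge x k (Function.update w k c) = (if c then (1:ℝ) else -1) • x k + Qg x k w := by
    intro w c
    rw [Rge_split, hQupd]
    congr 2
    simp [signs, Function.update_apply]
  have hQflip : ∀ u : Fin n → Bool, Qg x k (flipGT k u) = - Qg x k u :=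
    fun u => Qg_neg x fun i hi => by simp [flipGT, hi]
  have hA1 : ∀ u : Fin n → Bool,
      ‖Rge x k (Function.update u k b)‖ + ‖Rge x k (Function.update (flipGT k u) k b)‖
        = ‖x k + Qg x k u‖ + ‖x k - Qg x k u‖ := by
    intro u
    rw [hRupd u b, hRupd (flipGT k u) b, hQflip]
    cases b
    · rw [if_neg (by simp), neg_one_smul]
      exact norm_pair_neg (x k) (Qg x k u)
    · rw [if_pos rfl, one_smul]
      exact norm_pair_pos (x k) (Qg x k u)
  have hA2 : ∀ u : Fin n → Bool,
      ‖Rge x k u‖ + ‖Rge x k (flipc k u)‖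
        = ‖x k + Qg x k u‖ + ‖x k - Qg x k u‖ := by
    intro u
    have h1 : Qg x k (flipc k u) = Qg x k u := hQupd u _
    have h2 : signs (flipc k u) k = - signs u k :=
      signs_not (by simp [flipc, Function.update_apply])
    rw [Rge_split, Rge_split, h1, h2, neg_smul]
    cases hu : u k
    · rw [show signs u k = -1 from by simp [signs, hu], neg_one_smul, neg_neg]
      rw [show (-x k + Qg x k u) = -(x k - Qg x k u) from by abel, norm_neg, add_comm]
    · rw [show signs u k = 1 from by simp [signs, hu], one_smul]
      rw [show (-(x k) + Qg x k u) = -(x k - Qg x k u) from by abel, norm_neg]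
  have hs1 : ∑ u : Fin n → Bool,
      (‖Rge x k (Function.update u k b)‖ + ‖Rge x k (Function.update (flipGT k u) k b)‖)
      = 2 * ∑ u : Fin n → Bool, ‖Rge x k (Function.update u k b)‖ := by
    rw [Finset.sum_add_distrib]
    have h := Equiv.sum_comp (Function.Involutive.toPerm _ (flipGT_invol (n := n) k))
      (fun u => ‖Rge x k (Function.update u k b)‖)
    simp only [Function.Involutive.coe_toPerm] at h
    rw [h]; ring
  have hs2 : ∑ u : Fin n → Bool, (‖Rge x k u‖ + ‖Rge x k (flipc k u)‖)
      = 2 * ∑ u : Fin n → Bool, ‖Rge x k u‖ := by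
    rw [Finset.sum_add_distrib]
    have h := Equiv.sum_comp (Function.Involutive.toPerm _ (flipc_invol (n := n) k))
      (fun u => ‖Rge x k u‖)
    simp only [Function.Involutive.coe_toPerm] at h
    rw [h]; ring
  have e1 : ∑ u : Fin n → Bool,
      (‖Rge x k (Function.update u k b)‖ + ‖Rge x k (Function.update (flipGT k u) k b)‖)
      = ∑ u : Fin n → Bool, (‖Rge x k u‖ + ‖Rge x k (flipc k u)‖) := by
    rw [Finset.sum_congr rfl fun u _ => hA1 u, Finset.sum_congr rfl fun u _ => hA2 u]
  rw [hs1, hs2] at e1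
  linarith


lemma T_add_flipGT (k : Fin n) (s : Fin n → Bool) :
    T x s + T x (flipGT k s) = (2 : ℝ) • Sle x k s := by
  have hterm : ∀ i : Fin n, signs s i • x i + signs (flipGT k s) i • x i
      = if i ≤ k then (2 : ℝ) • (signs s i • x i) else 0 := by
    intro i
    by_cases h : i ≤ k
    · rw [if_pos h,
        signs_congr (show flipGT k s i = s i from by simp [flipGT, not_lt.2 h])]
      exact (two_smul ℝ _).symm
    · rw [if_neg h,
        signs_not (show flipGT k s i = !(s i) from by simp [flipGT, lt_of_not_ge h]),
        neg_smul, add_neg_cancel]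
  rw [T, T, ← Finset.sum_add_distrib, Finset.sum_congr rfl (fun i _ => hterm i),
    ← Finset.sum_filter, Sle, Finset.smul_sum]

lemma Fst_flipGT (k : Fin n) (s : Fin n → Bool) :
    Fst x k (flipGT k s) ↔ Fst x k s :=
  (Fst_congr x fun i hi => (show flipGT k s i = s i from by simp [flipGT, not_lt.2 hi]).symm).symm

lemma hdich {k : Fin n} {s : Fin n → Bool} (h : Fst x k s) :
    1 < ‖T x s‖ ∨ 1 < ‖T x (flipGT k s)‖ := by
  by_contra hcon
  push_neg at hcon
  have h1 : ‖T x s + T x (flipGT k s)‖ ≤ 2 :=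
    le_trans (norm_add_le _ _) (by linarith [hcon.1, hcon.2])
  rw [T_add_flipGT, norm_smul] at h1
  have : ‖(2 : ℝ)‖ = 2 := by norm_num
  rw [this] at h1
  have := h.1
  linarith

lemma levy_step (k : Fin n) :
    ∑ s : Fin n → Bool, (if Fst x k s then (1 : ℝ) else 0)
      ≤ 2 * ∑ s : Fin n → Bool, (if Fst x k s ∧ 1 < ‖T x s‖ then (1 : ℝ) else 0) := by
  have hpt : ∀ s : Fin n → Bool, (if Fst x k s then (1 : ℝ) else 0)
      ≤ (if Fst x k s ∧ 1 < ‖T x s‖ then (1 : ℝ) else 0)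
        + (if Fst x k s ∧ 1 < ‖T x (flipGT k s)‖ then (1 : ℝ) else 0) := by
    intro s
    by_cases hF : Fst x k s
    · rcases hdich x hF with h | h
      · rw [if_pos hF, if_pos ⟨hF, h⟩]
        have : (0:ℝ) ≤ (if Fst x k s ∧ 1 < ‖T x (flipGT k s)‖ then (1 : ℝ) else 0) := by
          split_ifs <;> norm_num
        linarith
      · rw [if_pos hF,
          if_pos (show Fst x k s ∧ 1 < ‖T x (flipGT k s)‖ from ⟨hF, h⟩)]
        have : (0:ℝ) ≤ (if Fst x k s ∧ 1 < ‖T x s‖ then (1 : ℝ) else 0) := by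
          split_ifs <;> norm_num
        linarith
    · simp [hF]
  have hflip : ∑ s : Fin n → Bool, (if Fst x k s ∧ 1 < ‖T x (flipGT k s)‖ then (1 : ℝ) else 0)
      = ∑ s : Fin n → Bool, (if Fst x k s ∧ 1 < ‖T x s‖ then (1 : ℝ) else 0) := by
    have h := Equiv.sum_comp (Function.Involutive.toPerm _ (flipGT_invol (n := n) k))
      (fun s => if Fst x k s ∧ 1 < ‖T x s‖ then (1 : ℝ) else 0)
    simp only [Function.Involutive.coe_toPerm] at h
    rw [← h]
    refine Finset.sum_congr rfl fun s _ => ?_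
    exact if_congr (and_congr_left' (Fst_flipGT x k s).symm) rfl rfl
  calc ∑ s : Fin n → Bool, (if Fst x k s then (1 : ℝ) else 0)
      ≤ ∑ s : Fin n → Bool, ((if Fst x k s ∧ 1 < ‖T x s‖ then (1 : ℝ) else 0)
          + (if Fst x k s ∧ 1 < ‖T x (flipGT k s)‖ then (1 : ℝ) else 0)) :=
        Finset.sum_le_sum fun s _ => hpt s
    _ = 2 * ∑ s : Fin n → Bool, (if Fst x k s ∧ 1 < ‖T x s‖ then (1 : ℝ) else 0) := by
        rw [Finset.sum_add_distrib, hflip]; ring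

lemma levy_total :
    ∑ k : Fin n, ∑ s : Fin n → Bool, (if Fst x k s then (1 : ℝ) else 0)
      ≤ 2 * ∑ s : Fin n → Bool, (if 1 < ‖T x s‖ then (1 : ℝ) else 0) := by
  calc ∑ k : Fin n, ∑ s : Fin n → Bool, (if Fst x k s then (1 : ℝ) else 0)
      ≤ ∑ k : Fin n, 2 * ∑ s : Fin n → Bool, (if Fst x k s ∧ 1 < ‖T x s‖ then (1 : ℝ) else 0) :=
        Finset.sum_le_sum fun k _ => levy_step x k
    _ = 2 * ∑ s : Fin n → Bool, ∑ k : Fin n, (if Fst x k s ∧ 1 < ‖T x s‖ then (1 : ℝ) else 0) := by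
        rw [← Finset.mul_sum, Finset.sum_comm]
    _ ≤ 2 * ∑ s : Fin n → Bool, (if 1 < ‖T x s‖ then (1 : ℝ) else 0) := by
        have hs : ∀ s : Fin n → Bool,
            ∑ k : Fin n, (if Fst x k s ∧ 1 < ‖T x s‖ then (1 : ℝ) else 0)
              ≤ (if 1 < ‖T x s‖ then (1 : ℝ) else 0) := by
          intro s
          by_cases hT : 1 < ‖T x s‖
          · rw [Finset.sum_congr rfl (fun k _ => if_congr (and_iff_left hT) rfl rfl),
              Finset.sum_boole, if_pos hT]
            have hcard : (Finset.univ.filter (fun k : Fin n => Fst x k s)).card ≤ 1 := by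
              refine Finset.card_le_one.2 fun a ha b hb => ?_
              rw [Finset.mem_filter] at ha hb
              exact Fst_unique x ha.2 hb.2
            exact_mod_cast hcard
          · simp [hT]
        have := Finset.sum_le_sum fun s (_ : s ∈ (Finset.univ : Finset (Fin n → Bool))) => hs s
        linarith

lemma Fst_mle (k : Fin n) (s u : Fin n → Bool) : Fst x k (mle k s u) ↔ Fst x k s :=
  (Fst_congr x fun i hi => (show mle k s u i = s i from by simp [mle, hi]).symm).symm

lemma Rge_mle (k : Fin n) (s u : Fin n → Bool) :
    Rge x k (mle k s u) = Rge x k (Function.update u k (s k)) := by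
  refine Rge_congr x fun i hi => ?_
  rcases eq_or_lt_of_le hi with rfl | hlt
  · simp [mle, Function.update_apply]
  · simp [mle, not_le.2 hlt, Function.update_apply, hlt.ne']

lemma decouple (k : Fin n) :
    (2 : ℝ) ^ n * ∑ s : Fin n → Bool, (if Fst x k s then ‖Rge x k s‖ else 0)
      ≤ (∑ s : Fin n → Bool, if Fst x k s then (1 : ℝ) else 0)
          * ∑ u : Fin n → Bool, ‖T x u‖ := by
  have step1 : (2 : ℝ) ^ n * ∑ s : Fin n → Bool, (if Fst x k s then ‖Rge x k s‖ else 0)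
      = ∑ p : (Fin n → Bool) × (Fin n → Bool), (if Fst x k p.1 then ‖Rge x k p.1‖ else 0) := by
    rw [Fintype.sum_prod_type]
    rw [Finset.mul_sum]
    refine Finset.sum_congr rfl fun s _ => ?_
    simp only [Finset.sum_const, card_cube, nsmul_eq_mul]
    push_cast; ring
  have hb := Equiv.sum_comp (Function.Involutive.toPerm _ (mle_swap_invol (n := n) k))
      (fun p : (Fin n → Bool) × (Fin n → Bool) => if Fst x k p.1 then ‖Rge x k p.1‖ else 0)
  simp only [Function.Involutive.coe_toPerm] at hb
  have step2 : ∑ p : (Fin n → Bool) × (Fin n → Bool), (if Fst x k p.1 then ‖Rge x k p.1‖ else 0)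
      = ∑ s : Fin n → Bool, (if Fst x k s then
          (∑ u : Fin n → Bool, ‖Rge x k (Function.update u k (s k))‖) else 0) := by
    rw [← hb, Fintype.sum_prod_type]
    refine Finset.sum_congr rfl fun s _ => ?_
    by_cases hF : Fst x k s
    · rw [if_pos hF]
      refine Finset.sum_congr rfl fun u _ => ?_
      show (if Fst x k (mle k s u) then ‖Rge x k (mle k s u)‖ else 0) = _
      rw [if_pos ((Fst_mle x k s u).2 hF), Rge_mle]
    · rw [if_neg hF]
      show (∑ u : Fin n → Bool, if Fst x k (mle k s u) then ‖Rge x k (mle k s u)‖ else (0:ℝ)) = 0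
      rw [Finset.sum_congr rfl fun u (_ : u ∈ (Finset.univ : Finset (Fin n → Bool))) =>
        if_neg (fun hc => hF ((Fst_mle x k s u).1 hc))]
      simp
  rw [step1, step2]
  have step3 : ∀ s : Fin n → Bool, (if Fst x k s then
        (∑ u : Fin n → Bool, ‖Rge x k (Function.update u k (s k))‖) else 0)
      ≤ (if Fst x k s then (1 : ℝ) else 0) * ∑ u : Fin n → Bool, ‖T x u‖ := by
    intro s
    by_cases hF : Fst x k s
    · rw [if_pos hF, if_pos hF, one_mul, updsum]
      exact jensen x k
    · rw [if_neg hF, if_neg hF, zero_mul]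
  calc ∑ s : Fin n → Bool, (if Fst x k s then
          (∑ u : Fin n → Bool, ‖Rge x k (Function.update u k (s k))‖) else 0)
      ≤ ∑ s : Fin n → Bool, (if Fst x k s then (1 : ℝ) else 0) * ∑ u : Fin n → Bool, ‖T x u‖ :=
        Finset.sum_le_sum fun s _ => step3 s
    _ = (∑ s : Fin n → Bool, if Fst x k s then (1 : ℝ) else 0)
          * ∑ u : Fin n → Bool, ‖T x u‖ := by rw [← Finset.sum_mul]

lemma max_le_sum (s : Fin n → Bool) :
    max (‖T x s‖ - 1) 0 ≤ ∑ k : Fin n, (if Fst x k s then ‖Rge x k s‖ else 0) := by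
  by_cases h : 1 < ‖T x s‖
  · obtain ⟨k, hk⟩ := Fst_exists x h
    calc max (‖T x s‖ - 1) 0 ≤ ‖Rge x k s‖ := max_le_rge x hk
      _ = (if Fst x k s then ‖Rge x k s‖ else 0) := (if_pos hk).symm
      _ ≤ ∑ k : Fin n, (if Fst x k s then ‖Rge x k s‖ else 0) := by
          refine Finset.single_le_sum (f := fun j : Fin n => if Fst x j s then ‖Rge x j s‖ else 0)
            (fun j _ => ?_) (Finset.mem_univ k)
          split_ifs
          · exact norm_nonneg _
          · exact le_rfl
  · rw [max_eq_right (by push_neg at h; linarith)]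
    refine Finset.sum_nonneg fun k _ => ?_
    split_ifs
    · exact norm_nonneg _
    · exact le_rfl

lemma main_count :
    (2 : ℝ) ^ n * ∑ s : Fin n → Bool, max (‖T x s‖ - 1) 0
      ≤ 4 * (∑ s : Fin n → Bool, if 1 < ‖T x s‖ then (1 : ℝ) else 0)
          * ∑ s : Fin n → Bool, ‖T x s‖ := by
  have hC0 : (0 : ℝ) ≤ ∑ s : Fin n → Bool, ‖T x s‖ :=
    Finset.sum_nonneg fun s _ => norm_nonneg _
  have hb0 : (0 : ℝ) ≤ ∑ s : Fin n → Bool, (if 1 < ‖T x s‖ then (1 : ℝ) else 0) :=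
    Finset.sum_nonneg fun s _ => by split_ifs <;> norm_num
  calc (2 : ℝ) ^ n * ∑ s : Fin n → Bool, max (‖T x s‖ - 1) 0
      ≤ (2 : ℝ) ^ n * ∑ s : Fin n → Bool, ∑ k : Fin n, (if Fst x k s then ‖Rge x k s‖ else 0) :=
        mul_le_mul_of_nonneg_left (Finset.sum_le_sum fun s _ => max_le_sum x s) (by positivity)
    _ = ∑ k : Fin n, (2 : ℝ) ^ n * ∑ s : Fin n → Bool, (if Fst x k s then ‖Rge x k s‖ else 0) := by
        rw [Finset.sum_comm, Finset.mul_sum]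
    _ ≤ ∑ k : Fin n, (∑ s : Fin n → Bool, if Fst x k s then (1 : ℝ) else 0)
          * ∑ u : Fin n → Bool, ‖T x u‖ :=
        Finset.sum_le_sum fun k _ => decouple x k
    _ = (∑ k : Fin n, ∑ s : Fin n → Bool, if Fst x k s then (1 : ℝ) else 0)
          * ∑ u : Fin n → Bool, ‖T x u‖ := by rw [← Finset.sum_mul]
    _ ≤ (2 * ∑ s : Fin n → Bool, (if 1 < ‖T x s‖ then (1 : ℝ) else 0))
          * ∑ u : Fin n → Bool, ‖T x u‖ :=
        mul_le_mul_of_nonneg_right (levy_total x) hC0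
    _ ≤ 4 * (∑ s : Fin n → Bool, if 1 < ‖T x s‖ then (1 : ℝ) else 0)
          * ∑ s : Fin n → Bool, ‖T x s‖ := by nlinarith

theorem key (x : Fin n → E) :
    (∑ s : Fin n → Bool, max (‖∑ i, signs s i • x i‖ - 1) 0) / 2 ^ n
      ≤ 4 * ((∑ s : Fin n → Bool, if 1 < ‖∑ i, signs s i • x i‖ then (1 : ℝ) else 0) / 2 ^ n)
          * ((∑ s : Fin n → Bool, ‖∑ i, signs s i • x i‖) / 2 ^ n) := by
  have hT : ∀ s : Fin n → Bool, (∑ i, signs s i • x i) = T x s := fun _ => rfl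
  simp only [hT]
  have h := main_count x
  set a := ∑ s : Fin n → Bool, max (‖T x s‖ - 1) 0 with ha
  set b := ∑ s : Fin n → Bool, (if 1 < ‖T x s‖ then (1 : ℝ) else 0) with hbdef
  set c := ∑ s : Fin n → Bool, ‖T x s‖ with hcdef
  have hb0 : 0 ≤ b := Finset.sum_nonneg fun s _ => by split_ifs <;> norm_num
  have hc0 : 0 ≤ c := Finset.sum_nonneg fun s _ => norm_nonneg _
  have h2 : (0 : ℝ) < 2 ^ n := by positivity
  have hrw : 4 * (b / 2 ^ n) * (c / 2 ^ n) = (4 * b * c) / (2 ^ n * 2 ^ n) := by ring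
  rw [hrw, div_le_div_iff₀ h2 (by positivity)]
  nlinarith [mul_le_mul_of_nonneg_right h (le_of_lt h2)]

end KahaneAux

/-- **Consequence of Kahane's inequality.** For random vectors `X₁, …, Xₙ` in a separable
Banach space and independent Rademacher signs independent of the `Xᵢ`, almost surely
`E_ε (‖∑ εᵢ Xᵢ‖ − 1)₊ ≤ 4 P_ε(‖∑ εᵢ Xᵢ‖ > 1) · E_ε ‖∑ εᵢ Xᵢ‖`; the conditional
expectation and probability over the signs are uniform averages over all `2ⁿ` sign
patterns. -/
theorem kahane_truncated_first_moment
    {Ω E : Type*} [MeasurableSpace Ω] [NormedAddCommGroup E] [NormedSpace ℝ E]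
    [CompleteSpace E] [TopologicalSpace.SeparableSpace E] [MeasurableSpace E] [BorelSpace E]
    (μ : Measure Ω) [IsProbabilityMeasure μ] (n : ℕ)
    (X : Fin n → Ω → E) (hXmeas : ∀ i, Measurable (X i)) :
    ∀ᵐ ω ∂μ,
      (∑ s : Fin n → Bool, max (‖∑ i, signs s i • X i ω‖ - 1) 0) / 2 ^ n
        ≤ 4 * ((∑ s : Fin n → Bool,
              if 1 < ‖∑ i, signs s i • X i ω‖ then (1 : ℝ) else 0) / 2 ^ n)
            * ((∑ s : Fin n → Bool, ‖∑ i, signs s i • X i ω‖) / 2 ^ n) := by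
  refine MeasureTheory.ae_of_all μ fun ω => ?_
  exact KahaneAux.key (fun i => X i ω)
end
end
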